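/- arXiv:1801.04128 — 6 statements merged into one kernel-verified Lean document; each statement's English description precedes it below -/
import Mathlib

section
/- Let n be an even positive integer and let H be a graph that does not contain a connected matching of size n/2. Then e(H) ≤ ((n−2)/2)·v(H). -/
/-- A connected matching of size `m` in `G`: a set of `m` pairwise disjoint edges of `G`,
all lying in the same connected component of `G`. -/
def HasConnectedMatching {V : Type*} (G : SimpleGraph V) (m : ℕ) : Prop :=
  ∃ M : Finset (Sym2 V), M.card = m ∧ (∀ e ∈ M, e ∈ G.edgeSet) ∧
    (∀ e ∈ M, ∀ f ∈ M, e ≠ f → ∀ v : V, v ∈ e → v ∉ f) ∧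
    ∃ c : G.ConnectedComponent, ∀ e ∈ M, ∀ v ∈ e, G.connectedComponentMk v = c

/-!
Within one connected component, having no connected matching of size `m` means that every
matching has at most `m - 1` edges, so summing over components it suffices to show that a graph
on `N` vertices whose matchings have at most `s` edges has at most `s N` edges. This goes by
induction on `N`: for `N ≤ 2s + 1` the trivial bound `N (N - 1) / 2` suffices, and a vertex of
degree at most `s` can be deleted. If all degrees exceed `s`, a maximum matching `M` misses two
vertices `u ≠ w`. Their neighbours are all matched and, as there is no augmenting path
`u a b w`, together they send at most two edges to each edge `ab` of `M`; hence
`deg u + deg w ≤ 2 |M| ≤ 2 s`, a contradiction.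
-/

open Finset
open scoped Classical

noncomputable section

variable {V : Type*}

def PairwiseVertexDisjoint (M : Finset (Sym2 V)) : Prop :=
  ∀ e ∈ M, ∀ f ∈ M, e ≠ f → ∀ v : V, v ∈ e → v ∉ f

namespace PairwiseVertexDisjoint

variable {M N : Finset (Sym2 V)} {e f g : Sym2 V} {v : V}

theorem mono (hN : PairwiseVertexDisjoint N) (h : M ⊆ N) : PairwiseVertexDisjoint M :=
  fun e he f hf hne v hv => hN e (h he) f (h hf) hne v hv

theorem insert (hM : PairwiseVertexDisjoint M) (hg : ∀ v ∈ g, ∀ e ∈ M, v ∉ e) :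
    PairwiseVertexDisjoint (insert g M) := by
  intro e he f hf hne v hve hvf
  rcases mem_insert.1 he with rfl | heM <;> rcases mem_insert.1 hf with rfl | hfM
  · exact hne rfl
  · exact hg v hve f hfM hvf
  · exact hg v hvf e heM hve
  · exact hM e heM f hfM hne v hve hvf

theorem not_mem_of_mem_erase (hM : PairwiseVertexDisjoint M) (he : e ∈ M) (hv : v ∈ e)
    (hf : f ∈ M.erase e) : v ∉ f :=
  hM e he f (mem_of_mem_erase hf) (ne_of_mem_erase hf).symm v hv

end PairwiseVertexDisjoint

theorem card_filter_exists_mem_le (S : Finset V) (M : Finset (Sym2 V)) :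
    #{v ∈ S | ∃ e ∈ M, v ∈ e} ≤ 2 * #M :=
  calc #{v ∈ S | ∃ e ∈ M, v ∈ e} ≤ #(M.biUnion Sym2.toFinset) :=
        card_le_card fun v hv => by
          obtain ⟨e, he, hve⟩ := (mem_filter.1 hv).2
          exact mem_biUnion.2 ⟨e, he, Sym2.mem_toFinset.2 hve⟩
    _ ≤ #M * 2 := card_biUnion_le_card_mul M _ 2 fun e _ => by
        rw [Sym2.card_toFinset]; split_ifs <;> omega
    _ = 2 * #M := mul_comm _ _

theorem card_le_two_mul_card_of_forall_mk_mem {M : Finset (Sym2 V)} {T : Finset (V × V)}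
    (hT : ∀ p ∈ T, s(p.1, p.2) ∈ M) : #T ≤ 2 * #M := by
  calc #T ≤ 2 * #(T.image fun p => s(p.1, p.2)) := card_le_mul_card_image T 2 fun z _ => ?_
    _ ≤ 2 * #M := Nat.mul_le_mul_left 2 (card_le_card (image_subset_iff.2 hT))
  induction z using Sym2.ind with
  | _ a b =>
    calc #{p ∈ T | s(p.1, p.2) = s(a, b)} ≤ #{(a, b), (b, a)} :=
          card_le_card fun ⟨x, y⟩ hp => by
            rcases Sym2.eq_iff.1 (mem_filter.1 hp).2 with ⟨rfl, rfl⟩ | ⟨rfl, rfl⟩ <;> simp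
      _ ≤ 2 := card_le_two

namespace SimpleGraph

variable (G : SimpleGraph V)

def edgesWithin (S : Finset V) : Finset (Sym2 V) := {e ∈ S.sym2 | e ∈ G.edgeSet}

def degreeWithin (S : Finset V) (u : V) : ℕ := #{w ∈ S | G.Adj u w}

variable {G} {S T : Finset V} {a b u w : V}

theorem mem_edgesWithin {e : Sym2 V} :
    e ∈ G.edgesWithin S ↔ e ∈ G.edgeSet ∧ ∀ v ∈ e, v ∈ S := by
  rw [edgesWithin, mem_filter, mem_sym2_iff, and_comm]

theorem mk_mem_edgesWithin : s(a, b) ∈ G.edgesWithin S ↔ G.Adj a b ∧ a ∈ S ∧ b ∈ S := by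
  rw [edgesWithin, mem_filter, mk_mem_sym2_iff, mem_edgeSet, and_comm]

theorem edgesWithin_mono (h : S ⊆ T) : G.edgesWithin S ⊆ G.edgesWithin T :=
  fun _ he => mem_edgesWithin.2
    ⟨(mem_edgesWithin.1 he).1, fun v hv => h ((mem_edgesWithin.1 he).2 v hv)⟩

variable (G S)

theorem two_mul_card_edgesWithin_le : 2 * #(G.edgesWithin S) ≤ #S * (#S - 1) := by
  have hsub : G.edgesWithin S ⊆ S.offDiag.image Sym2.mk.uncurry := by
    intro e he
    induction e using Sym2.ind with
    | _ a b =>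
      obtain ⟨hab, ha, hb⟩ := mk_mem_edgesWithin.1 he
      exact mem_image.2 ⟨(a, b), mem_offDiag.2 ⟨ha, hb, hab.ne⟩, rfl⟩
  calc 2 * #(G.edgesWithin S) ≤ 2 * #(S.offDiag.image Sym2.mk.uncurry) :=
        Nat.mul_le_mul_left 2 (card_le_card hsub)
    _ = #S * (#S - 1) := by rw [Sym2.two_mul_card_image_offDiag, offDiag_card, Nat.mul_sub_one]

theorem card_edgesWithin_le_card_erase_add_degreeWithin (u : V) :
    #(G.edgesWithin S) ≤ #(G.edgesWithin (S.erase u)) + G.degreeWithin S u := by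
  have hsub : G.edgesWithin S ⊆
      G.edgesWithin (S.erase u) ∪ {w ∈ S | G.Adj u w}.image (fun w => s(u, w)) := by
    intro e he
    by_cases hue : u ∈ e
    · obtain ⟨w, rfl⟩ := Sym2.mem_iff_exists.1 hue
      obtain ⟨huw, -, hw⟩ := mk_mem_edgesWithin.1 he
      exact mem_union_right _ (mem_image.2 ⟨w, mem_filter.2 ⟨hw, huw⟩, rfl⟩)
    · refine mem_union_left _ (mem_edgesWithin.2 ⟨(mem_edgesWithin.1 he).1, fun v hv => ?_⟩)
      exact mem_erase.2 ⟨fun hvu => hue (hvu ▸ hv), (mem_edgesWithin.1 he).2 v hv⟩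
  calc #(G.edgesWithin S) ≤ _ := card_le_card hsub
    _ ≤ _ := card_union_le _ _
    _ ≤ _ := Nat.add_le_add_left card_image_le _

variable {G S}

def IsMaximumMatchingIn (G : SimpleGraph V) (S : Finset V) (M : Finset (Sym2 V)) : Prop :=
  M ⊆ G.edgesWithin S ∧ PairwiseVertexDisjoint M ∧
    ∀ M' ⊆ G.edgesWithin S, PairwiseVertexDisjoint M' → #M' ≤ #M

theorem exists_isMaximumMatchingIn (G : SimpleGraph V) (S : Finset V) :
    ∃ M, G.IsMaximumMatchingIn S M := by
  obtain ⟨M, hM, hmax⟩ := exists_max_image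
    {M ∈ (G.edgesWithin S).powerset | PairwiseVertexDisjoint M} card
    ⟨∅, mem_filter.2 ⟨empty_mem_powerset _, by simp [PairwiseVertexDisjoint]⟩⟩
  rw [mem_filter, mem_powerset] at hM
  exact ⟨M, hM.1, hM.2, fun M' hMS hM' => hmax M' (mem_filter.2 ⟨mem_powerset.2 hMS, hM'⟩)⟩

namespace IsMaximumMatchingIn

variable {M : Finset (Sym2 V)} {g : Sym2 V} {y : V}

theorem exists_mem_of_mem (hM : G.IsMaximumMatchingIn S M) (hg : g ∈ G.edgesWithin S) :
    ∃ v ∈ g, ∃ e ∈ M, v ∈ e := by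
  by_contra! hgM
  induction g using Sym2.ind with
  | _ a b =>
    have hgM' : s(a, b) ∉ M := fun h => hgM a (Sym2.mem_mk_left a b) _ h (Sym2.mem_mk_left a b)
    have := hM.2.2 _ (insert_subset hg hM.1) (hM.2.1.insert hgM)
    rw [card_insert_of_notMem hgM'] at this
    omega

theorem exists_mk_mem_of_adj (hM : G.IsMaximumMatchingIn S M) (hu : u ∈ S)
    (huM : ∀ e ∈ M, u ∉ e) (hy : y ∈ S) (huy : G.Adj u y) : ∃ z ∈ S, s(y, z) ∈ M := by
  obtain ⟨v, hv, e, he, hve⟩ := hM.exists_mem_of_mem (mk_mem_edgesWithin.2 ⟨huy, hu, hy⟩)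
  obtain rfl | rfl := Sym2.mem_iff.1 hv
  · exact absurd hve (huM e he)
  obtain ⟨z, rfl⟩ := Sym2.mem_iff_exists.1 hve
  exact ⟨z, (mk_mem_edgesWithin.1 (hM.1 he)).2.2, he⟩

theorem not_adj_of_augmenting (hM : G.IsMaximumMatchingIn S M) (hu : u ∈ S) (hw : w ∈ S)
    (huM : ∀ e ∈ M, u ∉ e) (hwM : ∀ e ∈ M, w ∉ e) (huw : u ≠ w) (hab : s(a, b) ∈ M)
    (hua : G.Adj u a) : ¬ G.Adj w b := by
  intro hwb
  obtain ⟨hMS, hMd, hmax⟩ := hM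
  obtain ⟨hadj, ha, hb⟩ := mk_mem_edgesWithin.1 (hMS hab)
  have hub : u ≠ b := fun h => huM _ hab (h ▸ Sym2.mem_mk_right a b)
  have hwa : w ≠ a := fun h => hwM _ hab (h ▸ Sym2.mem_mk_left a b)
  set M₀ := M.erase s(a, b)
  have hM₀ : M₀ ⊆ M := erase_subset _ _
  -- swapping `ab` for `wb` gives a maximum matching that misses both `u` and `a`
  set M₁ := insert s(w, b) M₀
  have hM₁ : G.IsMaximumMatchingIn S M₁ := by
    refine ⟨insert_subset (mk_mem_edgesWithin.2 ⟨hwb, hw, hb⟩) (hM₀.trans hMS),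
      (hMd.mono hM₀).insert ?_, fun M' hM'S hM' => ?_⟩
    · rintro v hv f hf
      obtain rfl | rfl := Sym2.mem_iff.1 hv
      · exact hwM f (hM₀ hf)
      · exact hMd.not_mem_of_mem_erase hab (Sym2.mem_mk_right _ _) hf
    · rw [card_insert_of_notMem fun h => hwM _ (hM₀ h) (Sym2.mem_mk_left w b),
        card_erase_of_mem hab, Nat.sub_add_cancel (card_pos.2 ⟨_, hab⟩)]
      exact hmax M' hM'S hM'
  obtain ⟨v, hv, f, hf, hvf⟩ := hM₁.exists_mem_of_mem (mk_mem_edgesWithin.2 ⟨hua, hu, ha⟩)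
  obtain rfl | rfl := Sym2.mem_iff.1 hv <;> obtain rfl | hf := mem_insert.1 hf
  · exact (Sym2.mem_iff.1 hvf).elim huw hub
  · exact huM f (hM₀ hf) hvf
  · exact (Sym2.mem_iff.1 hvf).elim (Ne.symm hwa) hadj.ne
  · exact hMd.not_mem_of_mem_erase hab (Sym2.mem_mk_left _ _) hf hvf

theorem degreeWithin_add_degreeWithin_le (hM : G.IsMaximumMatchingIn S M) (hu : u ∈ S)
    (hw : w ∈ S) (huM : ∀ e ∈ M, u ∉ e) (hwM : ∀ e ∈ M, w ∉ e) (huw : u ≠ w) :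
    G.degreeWithin S u + G.degreeWithin S w ≤ 2 * #M := by
  set A := {p ∈ S ×ˢ S | s(p.1, p.2) ∈ M ∧ G.Adj u p.1}
  set B := {p ∈ S ×ˢ S | s(p.1, p.2) ∈ M ∧ G.Adj w p.2}
  have hA : G.degreeWithin S u ≤ #A := by
    refine (card_le_card fun y hy => ?_).trans (card_image_le (f := Prod.fst))
    obtain ⟨hy, huy⟩ := mem_filter.1 hy
    obtain ⟨z, hz, hyz⟩ := hM.exists_mk_mem_of_adj hu huM hy huy
    exact mem_image.2 ⟨(y, z), mem_filter.2 ⟨mem_product.2 ⟨hy, hz⟩, hyz, huy⟩, rfl⟩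
  have hB : G.degreeWithin S w ≤ #B := by
    refine (card_le_card fun y hy => ?_).trans (card_image_le (f := Prod.snd))
    obtain ⟨hy, hwy⟩ := mem_filter.1 hy
    obtain ⟨z, hz, hyz⟩ := hM.exists_mk_mem_of_adj hw hwM hy hwy
    exact mem_image.2
      ⟨(z, y), mem_filter.2 ⟨mem_product.2 ⟨hz, hy⟩, Sym2.eq_swap ▸ hyz, hwy⟩, rfl⟩
  have hAB : Disjoint A B := Finset.disjoint_left.2 fun _ hpA hpB =>
    hM.not_adj_of_augmenting hu hw huM hwM huw (mem_filter.1 hpA).2.1 (mem_filter.1 hpA).2.2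
      (mem_filter.1 hpB).2.2
  calc G.degreeWithin S u + G.degreeWithin S w ≤ #(A ∪ B) := by
        rw [card_union_of_disjoint hAB]; omega
    _ ≤ 2 * #M := card_le_two_mul_card_of_forall_mk_mem fun p hp => by
        rcases mem_union.1 hp with hp | hp <;> exact (mem_filter.1 hp).2.1

end IsMaximumMatchingIn

theorem exists_degreeWithin_le {s : ℕ}
    (h : ∀ M ⊆ G.edgesWithin S, PairwiseVertexDisjoint M → #M ≤ s) (hS : 2 * s + 2 ≤ #S) :
    ∃ u ∈ S, G.degreeWithin S u ≤ s := by
  obtain ⟨M, hM⟩ := exists_isMaximumMatchingIn G S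
  have hMs := h M hM.1 hM.2.1
  have hU : 1 < #{v ∈ S | ∀ e ∈ M, v ∉ e} := by
    have := card_filter_exists_mem_le S M
    have := card_filter_add_card_filter_not (s := S) (fun v => ∃ e ∈ M, v ∈ e)
    simp only [not_exists, not_and] at this
    omega
  obtain ⟨u, hu, w, hw, huw⟩ := one_lt_card.1 hU
  rw [mem_filter] at hu hw
  have := hM.degreeWithin_add_degreeWithin_le hu.1 hw.1 hu.2 hw.2 huw
  by_contra! hdeg
  have := hdeg u hu.1
  have := hdeg w hw.1
  omega

theorem card_edgesWithin_le_of_forall_card_le {s : ℕ} (S : Finset V)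
    (h : ∀ M ⊆ G.edgesWithin S, PairwiseVertexDisjoint M → #M ≤ s) :
    #(G.edgesWithin S) ≤ s * #S := by
  induction S using Finset.strongInduction with
  | H S ih =>
  by_cases hS : #S ≤ 2 * s + 1
  · have := G.two_mul_card_edgesWithin_le S
    have : #S * (#S - 1) ≤ #S * (2 * s) := Nat.mul_le_mul_left _ (by omega)
    nlinarith
  obtain ⟨u, hu, hdeg⟩ := exists_degreeWithin_le h (by omega)
  have hErase := ih _ (erase_ssubset hu)
    fun M hM => h M (hM.trans (edgesWithin_mono (erase_subset u S)))
  rw [card_erase_of_mem hu] at hErase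
  calc #(G.edgesWithin S) ≤ #(G.edgesWithin (S.erase u)) + G.degreeWithin S u :=
        G.card_edgesWithin_le_card_erase_add_degreeWithin S u
    _ ≤ s * (#S - 1) + s := Nat.add_le_add hErase hdeg
    _ = s * #S := by
        rw [← Nat.mul_add_one, Nat.sub_add_cancel (card_pos.2 ⟨u, hu⟩)]

theorem edgeSet_ncard_le_of_forall_fiber [Fintype V] {κ : Type*} (p : V → κ)
    (hp : ∀ a b, G.Adj a b → p a = p b) {s : ℕ}
    (h : ∀ k, #(G.edgesWithin {v | p v = k}) ≤ s * #{v | p v = k}) :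
    G.edgeSet.ncard ≤ s * Fintype.card V := by
  set F := (univ.image p).biUnion fun k => G.edgesWithin {v | p v = k}
  have hsub : G.edgeSet ⊆ F := by
    intro e he
    induction e using Sym2.ind with
    | _ a b =>
      refine mem_biUnion.2 ⟨p a, mem_image_of_mem p (mem_univ a), mk_mem_edgesWithin.2 ?_⟩
      simp [(mem_edgeSet G).1 he, hp a b he]
  calc G.edgeSet.ncard ≤ #F := by
        rw [← Set.ncard_coe_finset]; exact Set.ncard_le_ncard hsub F.finite_toSet
    _ ≤ ∑ k ∈ univ.image p, #(G.edgesWithin {v | p v = k}) := card_biUnion_le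
    _ ≤ ∑ k ∈ univ.image p, s * #{v | p v = k} := sum_le_sum fun k _ => h k
    _ = s * Fintype.card V := by rw [← mul_sum, ← card_eq_sum_card_image, card_univ]

end SimpleGraph

theorem card_lt_of_not_hasConnectedMatching [Fintype V] {H : SimpleGraph V} {m : ℕ}
    (h : ¬ HasConnectedMatching H m) (c : H.ConnectedComponent) {M : Finset (Sym2 V)}
    (hMS : M ⊆ H.edgesWithin {v | H.connectedComponentMk v = c})
    (hM : PairwiseVertexDisjoint M) : #M < m := by
  by_contra! hmM
  obtain ⟨M', hM'M, hM'⟩ := exists_subset_card_eq hmM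
  have hM'S : ∀ e ∈ M', _ := fun e he => SimpleGraph.mem_edgesWithin.1 (hMS (hM'M he))
  exact h ⟨M', hM', fun e he => (hM'S e he).1, hM.mono hM'M, c,
    fun e he v hv => by simpa using (hM'S e he).2 v hv⟩

end

theorem stmt4 (n : ℕ) (hn : Even n) (hn0 : 0 < n)
    (V : Type*) [Fintype V] (H : SimpleGraph V)
    (h : ¬ HasConnectedMatching H (n / 2)) :
    (H.edgeSet.ncard : ℝ) ≤ ((n : ℝ) - 2) / 2 * (Fintype.card V : ℝ) := by
  obtain ⟨m, rfl⟩ := hn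
  rw [show (m + m) / 2 = m by omega] at h
  have key : H.edgeSet.ncard ≤ (m - 1) * Fintype.card V :=
    H.edgeSet_ncard_le_of_forall_fiber H.connectedComponentMk
      (fun _ _ hab => SimpleGraph.ConnectedComponent.sound hab.reachable) fun c =>
        H.card_edgesWithin_le_of_forall_card_le _ fun _ hMS hM =>
          Nat.le_sub_one_of_lt (card_lt_of_not_hasConnectedMatching h c hMS hM)
  calc (H.edgeSet.ncard : ℝ) ≤ ((m - 1 : ℕ) : ℝ) * Fintype.card V := by exact_mod_cast key
    _ = ((m + m : ℕ) - 2) / 2 * Fintype.card V := by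
      rw [Nat.cast_sub (by omega : 1 ≤ m)]; push_cast; ring
end

section
/- Let n be an even positive integer and let G be a connected graph without a matching of size n/2. Let V(G) = S ∪ Q ∪ I be any partition of the vertex set satisfying: (1) |Q| + 2|S| = min{v(G), n − 1}; (2) I is an independent set, and if v(G) ≤ n − 1 then I = ∅; (3) every vertex in Q has at most one neighbor in I; (4) every vertex in I has degree less than n/2. Then e(G) ≤ C(|Q| + |S|, 2) + |I|·|S| + |Q|, where C(m,2) = m(m−1)/2. -/
/-!
As `I` is independent, every edge of `G` lies inside `S ∪ Q`, joins `S` to `I`, or joins `Q` to `I`.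
There are at most `C(|S ∪ Q|, 2)` edges of the first kind and `|S| |I|` of the second, and, since a
vertex of `Q` has at most one neighbour in `I`, at most `|Q|` of the third.
-/

/-- A matching of size `m` in `G`: a set of `m` pairwise disjoint edges of `G`. -/
def HasMatching {V : Type*} (G : SimpleGraph V) (m : ℕ) : Prop :=
  ∃ M : Finset (Sym2 V), M.card = m ∧ (∀ e ∈ M, e ∈ G.edgeSet) ∧
    (∀ e ∈ M, ∀ f ∈ M, e ≠ f → ∀ v : V, v ∈ e → v ∉ f)

namespace SimpleGraph

variable {V : Type*} (G : SimpleGraph V)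

def edgesBetween (X Y : Set V) : Set (Sym2 V) :=
  (fun p : V × V => s(p.1, p.2)) '' {p | p.1 ∈ X ∧ p.2 ∈ Y ∧ G.Adj p.1 p.2}

theorem mk_mem_edgesBetween {X Y : Set V} {u v : V} (hu : u ∈ X) (hv : v ∈ Y) (huv : G.Adj u v) :
    s(u, v) ∈ G.edgesBetween X Y :=
  ⟨(u, v), ⟨hu, hv, huv⟩, rfl⟩

theorem edgeSet_subset_of_partition {S Q I : Set V} (hpart : S ∪ Q ∪ I = Set.univ)
    (hI : ∀ u ∈ I, ∀ v ∈ I, ¬ G.Adj u v) :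
    G.edgeSet ⊆ G.edgesBetween (S ∪ Q) (S ∪ Q) ∪ G.edgesBetween S I ∪ G.edgesBetween Q I := by
  intro e he
  induction e using Sym2.ind with | h u v => ?_
  have huv : G.Adj u v := he
  rcases (hpart ▸ Set.mem_univ u : u ∈ S ∪ Q ∪ I) with hu | hu <;>
    rcases (hpart ▸ Set.mem_univ v : v ∈ S ∪ Q ∪ I) with hv | hv
  · exact .inl (.inl (G.mk_mem_edgesBetween hu hv huv))
  · rcases hu with hu | hu
    · exact .inl (.inr (G.mk_mem_edgesBetween hu hv huv))
    · exact .inr (G.mk_mem_edgesBetween hu hv huv)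
  · rw [Sym2.eq_swap]
    rcases hv with hv | hv
    · exact .inl (.inr (G.mk_mem_edgesBetween hv hu huv.symm))
    · exact .inr (G.mk_mem_edgesBetween hv hu huv.symm)
  · exact (hI u hu v hv huv).elim

variable [Finite V]

theorem ncard_edgesBetween_le_mul (X Y : Set V) :
    (G.edgesBetween X Y).ncard ≤ X.ncard * Y.ncard := by
  rw [← Set.ncard_prod]
  exact (Set.ncard_image_le (Set.toFinite _)).trans
    (Set.ncard_le_ncard fun p hp => ⟨hp.1, hp.2.1⟩)

theorem ncard_edgesBetween_le_of_unique_adj {X Y : Set V}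
    (hXY : ∀ x ∈ X, ∀ y₁ ∈ Y, ∀ y₂ ∈ Y, G.Adj x y₁ → G.Adj x y₂ → y₁ = y₂) :
    (G.edgesBetween X Y).ncard ≤ X.ncard :=
  (Set.ncard_image_le (Set.toFinite _)).trans <|
    Set.ncard_le_ncard_of_injOn Prod.fst (fun p hp => hp.1) fun p hp p' hp' h =>
      Prod.ext h (hXY _ hp.1 _ hp.2.1 _ hp'.2.1 hp.2.2 (h ▸ hp'.2.2))

theorem ncard_edgesBetween_self_le_choose (A : Set V) :
    (G.edgesBetween A A).ncard ≤ A.ncard.choose 2 := by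
  rw [← Nat.card_coe_set_eq A, ← Sym2.natCard_subtype_not_diag, ← Set.ncard_univ,
    ← Set.ncard_image_of_injective _ Subtype.val_injective,
    ← Set.ncard_image_of_injective _ (Sym2.map.injective Subtype.val_injective)]
  refine Set.ncard_le_ncard ?_
  rintro _ ⟨⟨x, y⟩, ⟨hx, hy, hxy⟩, rfl⟩
  refine ⟨_, ⟨⟨s((⟨x, hx⟩ : A), ⟨y, hy⟩), ?_⟩, trivial, rfl⟩, rfl⟩
  simpa using hxy.ne

theorem ncard_edgeSet_le_of_partition {S Q I : Set V} (hpart : S ∪ Q ∪ I = Set.univ)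
    (hSQ : Disjoint S Q) (hI : ∀ u ∈ I, ∀ v ∈ I, ¬ G.Adj u v)
    (hQI : ∀ q ∈ Q, ∀ v₁ ∈ I, ∀ v₂ ∈ I, G.Adj q v₁ → G.Adj q v₂ → v₁ = v₂) :
    G.edgeSet.ncard ≤ (S.ncard + Q.ncard).choose 2 + S.ncard * I.ncard + Q.ncard :=
  calc G.edgeSet.ncard
      ≤ (G.edgesBetween (S ∪ Q) (S ∪ Q) ∪ G.edgesBetween S I ∪ G.edgesBetween Q I).ncard :=
        Set.ncard_le_ncard (G.edgeSet_subset_of_partition hpart hI)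
    _ ≤ (G.edgesBetween (S ∪ Q) (S ∪ Q)).ncard + (G.edgesBetween S I).ncard
          + (G.edgesBetween Q I).ncard :=
        (Set.ncard_union_le _ _).trans (Nat.add_le_add_right (Set.ncard_union_le _ _) _)
    _ ≤ (S ∪ Q).ncard.choose 2 + S.ncard * I.ncard + Q.ncard := by
        gcongr
        · exact G.ncard_edgesBetween_self_le_choose _
        · exact G.ncard_edgesBetween_le_mul S I
        · exact G.ncard_edgesBetween_le_of_unique_adj hQI
    _ = (S.ncard + Q.ncard).choose 2 + S.ncard * I.ncard + Q.ncard := by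
        rw [Set.ncard_union_eq hSQ]

end SimpleGraph

theorem stmt7_general (V : Type*) [Fintype V] (G : SimpleGraph V)
    (S Q I : Set V)
    (hpart : S ∪ Q ∪ I = Set.univ)
    (hSQ : Disjoint S Q)
    (h2 : ∀ u ∈ I, ∀ v ∈ I, ¬ G.Adj u v)
    (h3 : ∀ q ∈ Q, ∀ v₁ ∈ I, ∀ v₂ ∈ I, G.Adj q v₁ → G.Adj q v₂ → v₁ = v₂) :
    (G.edgeSet.ncard : ℝ) ≤
      ((Q.ncard + S.ncard : ℝ) * ((Q.ncard + S.ncard : ℝ) - 1)) / 2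
        + (I.ncard : ℝ) * (S.ncard : ℝ) + (Q.ncard : ℝ) := by
  have hcount : (G.edgeSet.ncard : ℝ) ≤
      ((S.ncard + Q.ncard).choose 2 + S.ncard * I.ncard + Q.ncard : ℕ) := by
    exact_mod_cast G.ncard_edgeSet_le_of_partition hpart hSQ h2 h3
  push_cast [Nat.cast_choose_two] at hcount
  linarith

theorem stmt7 (n : ℕ) (hn : Even n) (hn0 : 0 < n)
    (V : Type*) [Fintype V] (G : SimpleGraph V) (hconn : G.Connected)
    (hnm : ¬ HasMatching G (n / 2))
    (S Q I : Set V)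
    (hpart : S ∪ Q ∪ I = Set.univ)
    (hSQ : Disjoint S Q) (hSI : Disjoint S I) (hQI : Disjoint Q I)
    (h1 : Q.ncard + 2 * S.ncard = min (Fintype.card V) (n - 1))
    (h2 : ∀ u ∈ I, ∀ v ∈ I, ¬ G.Adj u v)
    (h2' : Fintype.card V ≤ n - 1 → I = ∅)
    (h3 : ∀ q ∈ Q, ∀ v₁ ∈ I, ∀ v₂ ∈ I, G.Adj q v₁ → G.Adj q v₂ → v₁ = v₂)
    (h4 : ∀ v ∈ I, (G.neighborSet v).ncard < n / 2) :
    (G.edgeSet.ncard : ℝ) ≤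
      ((Q.ncard + S.ncard : ℝ) * ((Q.ncard + S.ncard : ℝ) - 1)) / 2
        + (I.ncard : ℝ) * (S.ncard : ℝ) + (Q.ncard : ℝ) :=
  stmt7_general V G S Q I hpart hSQ h2 h3
end

section
/- Let n be an even positive integer and let G be a connected graph without a matching of size n/2. Let V(G) = S ∪ Q ∪ I be any partition of the vertex set satisfying: (1) |Q| + 2|S| = min{v(G), n − 1}; (2) I is an independent set, and if v(G) ≤ n − 1 then I = ∅; (3) every vertex in Q has at most one neighbor in I; (4) every vertex in I has degree less than n/2. Define f(v) = (n−1)/4 for v ∈ S, f(v) = (n−1)/2 − deg(v)/2 for v ∈ Q, and f(v) = 0 for v ∈ I. Then Σ_{v ∈ V(G)} f(v) ≤ ((n−1)/2)·v(G) − e(G). -/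
/-!
Write the right-hand side, by the handshake lemma, as `∑ v, ((n - 1)/2 - deg v / 2)`. Vertex by
vertex this exceeds `f v` by exactly `0` on `Q`, by at least `(n - 1)/4 - (v(G) - 1)/2` on `S`
(as `deg v ≤ v(G) - 1`) and by at least `n/4` on `I` (as `2 deg v ≤ n - 2`). Since
`|I| = v(G) - min{v(G), n - 1} + |S|`, the total excess is
`|S| (2n + 1 - 2 v(G))/4 + (v(G) - min{v(G), n - 1}) n/4`, which is nonnegative because
`2|S| ≤ min{v(G), n - 1}`.
-/

open Finset

namespace SimpleGraph

variable {V : Type*} [Fintype V] (G : SimpleGraph V)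

lemma ncard_neighborSet_eq_degree [DecidableRel G.Adj] (v : V) :
    (G.neighborSet v).ncard = G.degree v := by
  rw [Set.ncard_eq_toFinset_card', Set.toFinset_card, card_neighborSet_eq_degree]

lemma sum_sub_half_degree [DecidableRel G.Adj] (c : ℝ) :
    ∑ v, (c - (G.degree v : ℝ) / 2) = c * Fintype.card V - G.edgeSet.ncard := by
  have hsum : ∑ v, (G.degree v : ℝ) = 2 * G.edgeSet.ncard := by
    rw [Set.ncard_eq_toFinset_card', Set.toFinset_card, ← G.edgeFinset_card]
    exact_mod_cast G.sum_degrees_eq_twice_card_edges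
  rw [sum_sub_distrib, ← sum_div, hsum, sum_const, card_univ, nsmul_eq_mul]
  ring

end SimpleGraph

lemma Set.ncard_add_ncard_add_ncard_eq_card {V : Type*} [Fintype V] {S Q I : Set V}
    (hpart : S ∪ Q ∪ I = Set.univ)
    (hSQ : Disjoint S Q) (hSI : Disjoint S I) (hQI : Disjoint Q I) :
    S.ncard + Q.ncard + I.ncard = Fintype.card V := by
  rw [← Set.ncard_union_eq hSQ, ← Set.ncard_union_eq (Set.disjoint_union_left.2 ⟨hSI, hQI⟩),
    hpart, Set.ncard_univ, Nat.card_eq_fintype_card]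

lemma sum_ite_mem_one_zero {V : Type*} [Fintype V] (S : Set V) [DecidablePred (· ∈ S)] :
    ∑ v, (if v ∈ S then (1 : ℝ) else 0) = S.ncard := by
  simp [Set.ncard_eq_toFinset_card']

lemma excess_nonneg_of_min_eq (n N s q i : ℕ) (hcard : s + q + i = N) (h1 : q + 2 * s = min N (n - 1)) :
    0 ≤ ((n - 1 : ℝ) / 4 - ((N : ℝ) - 1) / 2) * s + (n : ℝ) / 4 * i := by
  obtain ⟨m, hm⟩ : ∃ m, m = min N (n - 1) := ⟨_, rfl⟩
  have hsm : 2 * (s : ℝ) ≤ m := by exact_mod_cast (by omega : 2 * s ≤ m)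
  have hmn : (m : ℝ) ≤ n := by exact_mod_cast (by omega : m ≤ n)
  have hi : (i : ℝ) + m = N + s := by exact_mod_cast (by omega : i + m = N + s)
  have hs : (0 : ℝ) ≤ s := s.cast_nonneg
  rcases le_or_gt N n with hNn | hnN
  · have hNn : (N : ℝ) ≤ n := by exact_mod_cast hNn
    have hmN : (m : ℝ) ≤ N := by exact_mod_cast (by omega : m ≤ N)
    nlinarith [mul_nonneg hs (by linarith : (0 : ℝ) ≤ 2 * n + 1 - 2 * N),
      mul_nonneg (by linarith : (0 : ℝ) ≤ N - m) n.cast_nonneg]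
  · have hnN : (n : ℝ) + 1 ≤ N := by exact_mod_cast hnN
    nlinarith [mul_nonneg (by linarith : (0 : ℝ) ≤ m - 2 * s) (by linarith : (0 : ℝ) ≤ 2 * N - 2 * n - 1),
      mul_nonneg N.cast_nonneg (by linarith : (0 : ℝ) ≤ n - m)]

open scoped Classical in
lemma SimpleGraph.weight_add_excess_le {V : Type*} [Fintype V] (G : SimpleGraph V)
    [DecidableRel G.Adj] (n : ℕ) {S Q I : Set V} (hpart : S ∪ Q ∪ I = Set.univ)
    (hSQ : Disjoint S Q) (hSI : Disjoint S I) (hQI : Disjoint Q I)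
    (h4 : ∀ v ∈ I, (G.neighborSet v).ncard < n / 2) (v : V) :
    (if v ∈ S then ((n : ℝ) - 1) / 4
      else if v ∈ Q then ((n : ℝ) - 1) / 2 - ((G.neighborSet v).ncard : ℝ) / 2
      else 0)
    + ((((n : ℝ) - 1) / 4 - ((Fintype.card V : ℝ) - 1) / 2) * (if v ∈ S then 1 else 0)
      + (n : ℝ) / 4 * (if v ∈ I then 1 else 0))
    ≤ ((n : ℝ) - 1) / 2 - (G.degree v : ℝ) / 2 := by
  have hv : v ∈ S ∪ Q ∪ I := hpart ▸ Set.mem_univ v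
  rcases hv with (hS | hQ) | hI
  · have hdeg : (G.degree v : ℝ) + 1 ≤ Fintype.card V := by exact_mod_cast G.degree_lt_card_verts v
    simp only [hS, if_true, Set.disjoint_left.1 hSI hS, if_false]
    linarith
  · simp only [Set.disjoint_right.1 hSQ hQ, hQ, Set.disjoint_left.1 hQI hQ, if_true, if_false,
      G.ncard_neighborSet_eq_degree]
    linarith
  · have hdeg : 2 * (G.degree v : ℝ) + 2 ≤ n := by
      have := h4 v hI
      rw [G.ncard_neighborSet_eq_degree] at this
      exact_mod_cast (by omega : 2 * G.degree v + 2 ≤ n)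
    simp only [Set.disjoint_right.1 hSI hI, Set.disjoint_right.1 hQI hI, hI, if_true, if_false]
    linarith

open scoped Classical in
theorem stmt8_general (n : ℕ)
    (V : Type*) [Fintype V] (G : SimpleGraph V)
    (S Q I : Set V)
    (hpart : S ∪ Q ∪ I = Set.univ)
    (hSQ : Disjoint S Q) (hSI : Disjoint S I) (hQI : Disjoint Q I)
    (h1 : Q.ncard + 2 * S.ncard = min (Fintype.card V) (n - 1))
    (h4 : ∀ v ∈ I, (G.neighborSet v).ncard < n / 2) :
    ∑ v : V, (if v ∈ S then ((n : ℝ) - 1) / 4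
      else if v ∈ Q then ((n : ℝ) - 1) / 2 - ((G.neighborSet v).ncard : ℝ) / 2
      else 0)
    ≤ ((n : ℝ) - 1) / 2 * (Fintype.card V : ℝ) - (G.edgeSet.ncard : ℝ) := by
  have hexcess : 0 ≤ ∑ v : V,
      ((((n : ℝ) - 1) / 4 - ((Fintype.card V : ℝ) - 1) / 2) * (if v ∈ S then 1 else 0)
        + (n : ℝ) / 4 * (if v ∈ I then 1 else 0)) := by
    rw [sum_add_distrib, ← mul_sum, ← mul_sum, sum_ite_mem_one_zero, sum_ite_mem_one_zero]
    exact excess_nonneg_of_min_eq n _ _ _ _ (Set.ncard_add_ncard_add_ncard_eq_card hpart hSQ hSI hQI) h1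
  refine (le_add_of_nonneg_right hexcess).trans ?_
  rw [← sum_add_distrib, ← G.sum_sub_half_degree]
  exact sum_le_sum fun v _ => G.weight_add_excess_le n hpart hSQ hSI hQI h4 v

open scoped Classical in
theorem stmt8 (n : ℕ) (hn : Even n) (hn0 : 0 < n)
    (V : Type*) [Fintype V] (G : SimpleGraph V) (hconn : G.Connected)
    (hnm : ¬ HasMatching G (n / 2))
    (S Q I : Set V)
    (hpart : S ∪ Q ∪ I = Set.univ)
    (hSQ : Disjoint S Q) (hSI : Disjoint S I) (hQI : Disjoint Q I)
    (h1 : Q.ncard + 2 * S.ncard = min (Fintype.card V) (n - 1))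
    (h2 : ∀ u ∈ I, ∀ v ∈ I, ¬ G.Adj u v)
    (h2' : Fintype.card V ≤ n - 1 → I = ∅)
    (h3 : ∀ q ∈ Q, ∀ v₁ ∈ I, ∀ v₂ ∈ I, G.Adj q v₁ → G.Adj q v₂ → v₁ = v₂)
    (h4 : ∀ v ∈ I, (G.neighborSet v).ncard < n / 2) :
    ∑ v : V, (if v ∈ S then ((n : ℝ) - 1) / 4
      else if v ∈ Q then ((n : ℝ) - 1) / 2 - ((G.neighborSet v).ncard : ℝ) / 2
      else 0)
    ≤ ((n : ℝ) - 1) / 2 * (Fintype.card V : ℝ) - (G.edgeSet.ncard : ℝ) :=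
  stmt8_general n V G S Q I hpart hSQ hSI hQI h1 h4
end

section
/- Let n be an even positive integer and let G be a graph (not necessarily connected) without a connected matching of size n/2. Suppose that for every connected component C of G a partition V(C) = S_C ∪ Q_C ∪ I_C is given satisfying: (1) |Q_C| + 2|S_C| = min{v(C), n − 1}; (2) I_C is an independent set, and if v(C) ≤ n − 1 then I_C = ∅; (3) every vertex in Q_C has at most one neighbor in I_C; (4) every vertex in I_C has degree less than n/2. Define f(v) = (n−1)/4 if v lies in the S-part of its component, f(v) = (n−1)/2 − deg(v)/2 if v lies in the Q-part, and f(v) = 0 if v lies in the I-part. Then Σ_{v ∈ V(G)} f(v) ≤ ((n−1)/2)·v(G) − e(G). -/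
private lemma point_aux {V : Type*} [Fintype V] (G : SimpleGraph V) [DecidableRel G.Adj]
    (P R : V → Prop) [DecidablePred P] [DecidablePred R] (v : V) :
    (if P v then (((G.neighborFinset v).filter R).card : ℝ) else 0)
      = ∑ u : V, (if P v ∧ G.Adj v u ∧ R u then (1:ℝ) else 0) := by
  by_cases hv : P v
  · rw [if_pos hv]
    rw [SimpleGraph.neighborFinset_eq_filter, Finset.filter_filter, Finset.card_filter]
    push_cast
    refine Finset.sum_congr rfl fun u _ => ?_
    simp [hv]
  · rw [if_neg hv]
    symm
    refine Finset.sum_eq_zero fun u _ => ?_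
    simp [hv]

private lemma swap_aux {V : Type*} [Fintype V] (G : SimpleGraph V) [DecidableRel G.Adj]
    (P R : V → Prop) [DecidablePred P] [DecidablePred R] :
    ∑ v : V, (if P v then (((G.neighborFinset v).filter R).card : ℝ) else 0)
      = ∑ v : V, (if R v then (((G.neighborFinset v).filter P).card : ℝ) else 0) := by
  calc ∑ v : V, (if P v then (((G.neighborFinset v).filter R).card : ℝ) else 0)
      = ∑ v : V, ∑ u : V, (if P v ∧ G.Adj v u ∧ R u then (1:ℝ) else 0) :=
        Finset.sum_congr rfl fun v _ => point_aux G P R v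
    _ = ∑ u : V, ∑ v : V, (if P v ∧ G.Adj v u ∧ R u then (1:ℝ) else 0) := Finset.sum_comm
    _ = ∑ u : V, (if R u then (((G.neighborFinset u).filter P).card : ℝ) else 0) := by
        refine Finset.sum_congr rfl fun u _ => ?_
        rw [point_aux G R P u]
        refine Finset.sum_congr rfl fun v _ => ?_
        refine if_congr ?_ rfl rfl
        constructor
        · rintro ⟨h1, h2, h3⟩; exact ⟨h3, h2.symm, h1⟩
        · rintro ⟨h1, h2, h3⟩; exact ⟨h3, h2.symm, h1⟩

open scoped Classical in
theorem stmt9 (n : ℕ) (hn : Even n) (hn0 : 0 < n)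
    (V : Type*) [Fintype V] (G : SimpleGraph V)
    (hnm : ¬ HasConnectedMatching G (n / 2))
    (S Q I : G.ConnectedComponent → Set V)
    (hpart : ∀ c : G.ConnectedComponent, S c ∪ Q c ∪ I c = c.supp)
    (hdisj : ∀ c : G.ConnectedComponent,
      Disjoint (S c) (Q c) ∧ Disjoint (S c) (I c) ∧ Disjoint (Q c) (I c))
    (h1 : ∀ c : G.ConnectedComponent,
      (Q c).ncard + 2 * (S c).ncard = min c.supp.ncard (n - 1))
    (h2 : ∀ c : G.ConnectedComponent, ∀ u ∈ I c, ∀ v ∈ I c, ¬ G.Adj u v)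
    (h2' : ∀ c : G.ConnectedComponent, c.supp.ncard ≤ n - 1 → I c = ∅)
    (h3 : ∀ c : G.ConnectedComponent, ∀ q ∈ Q c, ∀ v₁ ∈ I c, ∀ v₂ ∈ I c,
      G.Adj q v₁ → G.Adj q v₂ → v₁ = v₂)
    (h4 : ∀ c : G.ConnectedComponent, ∀ v ∈ I c, (G.neighborSet v).ncard < n / 2) :
    ∑ v : V, (if v ∈ S (G.connectedComponentMk v) then ((n : ℝ) - 1) / 4
      else if v ∈ Q (G.connectedComponentMk v) then
        ((n : ℝ) - 1) / 2 - ((G.neighborSet v).ncard : ℝ) / 2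
      else 0)
    ≤ ((n : ℝ) - 1) / 2 * (Fintype.card V : ℝ) - (G.edgeSet.ncard : ℝ) := by
  classical
  obtain ⟨k, hk⟩ := hn
  have hk1 : 1 ≤ k := by omega
  set c : V → G.ConnectedComponent := G.connectedComponentMk with hcdef
  have hnr : (n : ℝ) = 2 * (k : ℝ) := by rw [hk]; push_cast; ring
  have hadj : ∀ {u v : V}, G.Adj u v → c u = c v := fun h =>
    SimpleGraph.ConnectedComponent.sound h.reachable
  have hmem : ∀ v : V, v ∈ S (c v) ∪ Q (c v) ∪ I (c v) := by
    intro v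
    rw [hpart]
    exact (SimpleGraph.ConnectedComponent.mem_supp_iff _ v).2 rfl
  have hdS : ∀ v : V, v ∈ S (c v) → v ∉ Q (c v) ∧ v ∉ I (c v) := fun v hv =>
    ⟨fun h => Set.disjoint_left.mp (hdisj (c v)).1 hv h,
     fun h => Set.disjoint_left.mp (hdisj (c v)).2.1 hv h⟩
  have hdQ : ∀ v : V, v ∈ Q (c v) → v ∉ S (c v) ∧ v ∉ I (c v) := fun v hv =>
    ⟨fun h => Set.disjoint_left.mp (hdisj (c v)).1 h hv,
     fun h => Set.disjoint_left.mp (hdisj (c v)).2.2 hv h⟩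
  have hdI : ∀ v : V, v ∈ I (c v) → v ∉ S (c v) ∧ v ∉ Q (c v) := fun v hv =>
    ⟨fun h => Set.disjoint_left.mp (hdisj (c v)).2.1 h hv,
     fun h => Set.disjoint_left.mp (hdisj (c v)).2.2 h hv⟩
  have hSsupp : ∀ (d : G.ConnectedComponent) (v : V), v ∈ S d → c v = d := by
    intro d v hv
    have : v ∈ d.supp := by rw [← hpart]; exact Or.inl (Or.inl hv)
    exact (SimpleGraph.ConnectedComponent.mem_supp_iff _ v).1 this
  have hIsupp : ∀ (d : G.ConnectedComponent) (v : V), v ∈ I d → c v = d := by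
    intro d v hv
    have : v ∈ d.supp := by rw [← hpart]; exact Or.inr hv
    exact (SimpleGraph.ConnectedComponent.mem_supp_iff _ v).1 this
  -- neighbor counts by class
  set NS : V → Finset V := fun v => (G.neighborFinset v).filter (fun u => u ∈ S (c u)) with hNS
  set NQ : V → Finset V := fun v => (G.neighborFinset v).filter (fun u => u ∈ Q (c u)) with hNQ
  set NI : V → Finset V := fun v => (G.neighborFinset v).filter (fun u => u ∈ I (c u)) with hNI
  have hdeg : ∀ v : V, (G.neighborSet v).ncard = G.degree v := by
    intro v
    rw [← Nat.card_coe_set_eq, Nat.card_eq_fintype_card,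
      SimpleGraph.card_neighborSet_eq_degree]
  have hsplit : ∀ v : V, G.degree v = (NS v).card + (NQ v).card + (NI v).card := by
    intro v
    simp only [hNS, hNQ, hNI]
    rw [Finset.card_filter, Finset.card_filter, Finset.card_filter,
      ← Finset.sum_add_distrib, ← Finset.sum_add_distrib,
      SimpleGraph.degree, Finset.card_eq_sum_ones]
    refine Finset.sum_congr rfl fun u _ => ?_
    rcases hmem u with (hS | hQ) | hI
    · rw [if_pos hS, if_neg (hdS u hS).1, if_neg (hdS u hS).2]
    · rw [if_neg (hdQ u hQ).1, if_pos hQ, if_neg (hdQ u hQ).2]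
    · rw [if_neg (hdI u hI).1, if_neg (hdI u hI).2, if_pos hI]
  have hNIzero : ∀ v : V, v ∈ I (c v) → (NI v).card = 0 := by
    intro v hv
    simp only [hNI, Finset.card_eq_zero]
    rw [Finset.filter_eq_empty_iff]
    intro u hu
    have hadjvu : G.Adj v u := (SimpleGraph.mem_neighborFinset _ _ _).1 hu
    intro huI
    have hcu : c u = c v := (hadj hadjvu).symm
    rw [hcu] at huI
    exact h2 (c v) v hv u huI hadjvu
  -- bound for S-vertices
  have P1 : ∀ v : V, v ∈ S (c v) →
      (NS v).card + (NQ v).card + 1 + 2 * (S (c v)).ncard ≤ (n - 1) + (S (c v)).ncard := by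
    intro v hv
    have hsub : NS v ∪ NQ v ∪ {v} ⊆ (S (c v) ∪ Q (c v)).toFinset := by
      intro u hu
      rw [Set.mem_toFinset]
      rcases Finset.mem_union.mp hu with hu | hu
      · rcases Finset.mem_union.mp hu with hu | hu
        · simp only [hNS, Finset.mem_filter] at hu
          have : c u = c v := (hadj ((SimpleGraph.mem_neighborFinset _ _ _).1 hu.1)).symm
          exact Or.inl (this ▸ hu.2)
        · simp only [hNQ, Finset.mem_filter] at hu
          have : c u = c v := (hadj ((SimpleGraph.mem_neighborFinset _ _ _).1 hu.1)).symm
          exact Or.inr (this ▸ hu.2)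
      · rw [Finset.mem_singleton] at hu
        exact Or.inl (hu ▸ hv)
    have d1 : Disjoint (NS v) (NQ v) := by
      rw [Finset.disjoint_left]
      intro u hu1 hu2
      simp only [hNS, Finset.mem_filter] at hu1
      simp only [hNQ, Finset.mem_filter] at hu2
      exact (hdS u hu1.2).1 hu2.2
    have d2 : Disjoint (NS v ∪ NQ v) {v} := by
      rw [Finset.disjoint_right]
      intro u hu1 hu2
      rw [Finset.mem_singleton] at hu1
      subst hu1
      rcases Finset.mem_union.mp hu2 with hu | hu
      · simp only [hNS, Finset.mem_filter, SimpleGraph.mem_neighborFinset] at hu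
        exact G.irrefl hu.1
      · simp only [hNQ, Finset.mem_filter, SimpleGraph.mem_neighborFinset] at hu
        exact G.irrefl hu.1
    have hcard : (NS v ∪ NQ v ∪ {v}).card = (NS v).card + (NQ v).card + 1 := by
      rw [Finset.card_union_of_disjoint d2, Finset.card_union_of_disjoint d1,
        Finset.card_singleton]
    have hle : (NS v).card + (NQ v).card + 1 ≤ (S (c v) ∪ Q (c v)).toFinset.card := by
      rw [← hcard]; exact Finset.card_le_card hsub
    have hcup : (S (c v) ∪ Q (c v)).toFinset.card = (S (c v)).ncard + (Q (c v)).ncard := by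
      rw [← Set.ncard_eq_toFinset_card',
        Set.ncard_union_eq (hdisj (c v)).1 (Set.toFinite _) (Set.toFinite _)]
    have hmin := h1 (c v)
    have hminle : min (c v).supp.ncard (n - 1) ≤ n - 1 := min_le_right _ _
    omega
  have P2 : ∀ v : V, (NS v).card ≤ (S (c v)).ncard := by
    intro v
    have hsub : NS v ⊆ (S (c v)).toFinset := by
      intro u hu
      simp only [hNS, Finset.mem_filter] at hu
      have : c u = c v := (hadj ((SimpleGraph.mem_neighborFinset _ _ _).1 hu.1)).symm
      rw [Set.mem_toFinset]
      exact this ▸ hu.2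
    calc (NS v).card ≤ (S (c v)).toFinset.card := Finset.card_le_card hsub
      _ = (S (c v)).ncard := (Set.ncard_eq_toFinset_card' _).symm
  -- the key per-component cardinality facts
  have hkey : ∀ d : G.ConnectedComponent, (S d).ncard = 0 ∨
      ((S d).ncard + 1 ≤ (I d).ncard ∧ 2 * (S d).ncard + 1 ≤ n) := by
    intro d
    have hsum : d.supp.ncard = (S d).ncard + (Q d).ncard + (I d).ncard := by
      rw [← hpart d,
        Set.ncard_union_eq (by
          rw [Set.disjoint_union_left]
          exact ⟨(hdisj d).2.1, (hdisj d).2.2⟩) (Set.toFinite _) (Set.toFinite _),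
        Set.ncard_union_eq (hdisj d).1 (Set.toFinite _) (Set.toFinite _)]
    have h1d := h1 d
    by_cases hle : d.supp.ncard ≤ n - 1
    · have hI0 : (I d).ncard = 0 := by rw [h2' d hle]; exact Set.ncard_empty _
      rw [min_eq_left hle] at h1d
      left; omega
    · right
      rw [min_eq_right (by omega)] at h1d
      omega
  -- swap lemma
  have hswap : ∑ v : V, (if v ∈ S (c v) then ((NI v).card : ℝ) else 0)
      = ∑ v : V, (if v ∈ I (c v) then ((NS v).card : ℝ) else 0) := by
    simp only [hNS, hNI]
    exact swap_aux G (fun u => u ∈ S (c u)) (fun u => u ∈ I (c u))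
  -- the sigma function
  set σf : V → ℝ := fun v =>
    if v ∈ S (c v) then ((n : ℝ) - 1) / 2 - 1 - ((S (c v)).ncard : ℝ)
    else if v ∈ I (c v) then ((S (c v)).ncard : ℝ) - (k : ℝ) else 0 with hσf
  have hgroup : ∑ v : V, σf v ≤ 0 := by
    haveI : Fintype G.ConnectedComponent := inferInstance
    rw [← Finset.sum_fiberwise_of_maps_to (fun v _ => Finset.mem_univ (c v)) σf]
    refine Finset.sum_nonpos fun d _ => ?_
    have hin : ∑ v ∈ Finset.univ.filter (fun v => c v = d), σf v
        = ((S d).ncard : ℝ) * (((n : ℝ) - 1) / 2 - 1 - ((S d).ncard : ℝ))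
          + ((I d).ncard : ℝ) * (((S d).ncard : ℝ) - (k : ℝ)) := by
      have hpt : ∀ v ∈ Finset.univ.filter (fun v => c v = d), σf v
          = (if v ∈ S d then (((n : ℝ) - 1) / 2 - 1 - ((S d).ncard : ℝ)) else 0)
            + (if v ∈ I d then (((S d).ncard : ℝ) - (k : ℝ)) else 0) := by
        intro v hv
        have hcv : c v = d := (Finset.mem_filter.mp hv).2
        simp only [hσf, hcv]
        by_cases hS : v ∈ S d
        · rw [if_pos hS, if_pos hS, if_neg (fun h => Set.disjoint_left.mp (hdisj d).2.1 hS h)]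
          ring
        · rw [if_neg hS, if_neg hS]
          by_cases hI : v ∈ I d
          · rw [if_pos hI]; ring
          · rw [if_neg hI]; ring
      rw [Finset.sum_congr rfl hpt, Finset.sum_add_distrib]
      have hfS : (Finset.univ.filter (fun v => c v = d)).filter (fun v => v ∈ S d)
          = (S d).toFinset := by
        ext v
        simp only [Finset.mem_filter, Finset.mem_univ, true_and, Set.mem_toFinset]
        exact ⟨fun h => h.2, fun h => ⟨hSsupp d v h, h⟩⟩
      have hfI : (Finset.univ.filter (fun v => c v = d)).filter (fun v => v ∈ I d)
          = (I d).toFinset := by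
        ext v
        simp only [Finset.mem_filter, Finset.mem_univ, true_and, Set.mem_toFinset]
        exact ⟨fun h => h.2, fun h => ⟨hIsupp d v h, h⟩⟩
      rw [← Finset.sum_filter, ← Finset.sum_filter, hfS, hfI,
        Finset.sum_const, Finset.sum_const, nsmul_eq_mul, nsmul_eq_mul,
        ← Set.ncard_eq_toFinset_card', ← Set.ncard_eq_toFinset_card']
    rw [hin]
    rcases hkey d with h0 | ⟨ht, hs⟩
    · rw [h0]
      push_cast
      have : (0:ℝ) ≤ ((I d).ncard : ℝ) := Nat.cast_nonneg _
      nlinarith [hk1, this]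
    · have ht' : ((S d).ncard : ℝ) + 1 ≤ ((I d).ncard : ℝ) := by exact_mod_cast ht
      have hs' : 2 * ((S d).ncard : ℝ) + 1 ≤ (n : ℝ) := by exact_mod_cast hs
      have hsn : (0:ℝ) ≤ ((S d).ncard : ℝ) := Nat.cast_nonneg _
      rw [hnr] at hs' ⊢
      nlinarith [mul_nonneg (by linarith : (0:ℝ) ≤ ((I d).ncard : ℝ) - (((S d).ncard : ℝ) + 1))
        (by linarith : (0:ℝ) ≤ (k : ℝ) - ((S d).ncard : ℝ))]
  -- main inequality on the transformed sum
  have hT : ∑ v : V, (2 * (if v ∈ S (c v) then ((n : ℝ) - 1) / 4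
      else if v ∈ Q (c v) then ((n : ℝ) - 1) / 2 - ((G.neighborSet v).ncard : ℝ) / 2
      else 0) + (G.degree v : ℝ) - ((n : ℝ) - 1)) ≤ 0 := by
    have e2 : ∑ v : V, (2 * (if v ∈ S (c v) then ((n : ℝ) - 1) / 4
        else if v ∈ Q (c v) then ((n : ℝ) - 1) / 2 - ((G.neighborSet v).ncard : ℝ) / 2
        else 0) + (G.degree v : ℝ) - ((n : ℝ) - 1))
        = ∑ v : V, ((if v ∈ S (c v) then ((NS v).card : ℝ) + ((NQ v).card : ℝ) - ((n : ℝ) - 1) / 2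
            else if v ∈ I (c v) then ((NS v).card : ℝ) + ((NQ v).card : ℝ) - ((n : ℝ) - 1) else 0)
          + (if v ∈ S (c v) then ((NI v).card : ℝ) else 0)) := by
      refine Finset.sum_congr rfl fun v _ => ?_
      have hd : (G.degree v : ℝ) = ((NS v).card : ℝ) + ((NQ v).card : ℝ) + ((NI v).card : ℝ) := by
        exact_mod_cast hsplit v
      have hdn : ((G.neighborSet v).ncard : ℝ) = (G.degree v : ℝ) := by exact_mod_cast hdeg v
      rcases hmem v with (hS | hQ) | hI
      · rw [if_pos hS, if_pos hS, if_pos hS]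
        linarith
      · rw [if_neg (hdQ v hQ).1, if_pos hQ, if_neg (hdQ v hQ).1, if_neg (hdQ v hQ).2,
          if_neg (hdQ v hQ).1]
        linarith
      · have hNI0 : ((NI v).card : ℝ) = 0 := by exact_mod_cast hNIzero v hI
        rw [if_neg (hdI v hI).1, if_neg (hdI v hI).2, if_neg (hdI v hI).1, if_pos hI,
          if_neg (hdI v hI).1]
        linarith
    rw [e2, Finset.sum_add_distrib, hswap, ← Finset.sum_add_distrib]
    have e3 : ∀ v ∈ (Finset.univ : Finset V),
        ((if v ∈ S (c v) then ((NS v).card : ℝ) + ((NQ v).card : ℝ) - ((n : ℝ) - 1) / 2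
            else if v ∈ I (c v) then ((NS v).card : ℝ) + ((NQ v).card : ℝ) - ((n : ℝ) - 1) else 0)
          + (if v ∈ I (c v) then ((NS v).card : ℝ) else 0)) ≤ σf v := by
      intro v _
      simp only [hσf]
      rcases hmem v with (hS | hQ) | hI
      · rw [if_pos hS, if_pos hS, if_neg (hdS v hS).2]
        have := P1 v hS
        have hcast : ((NS v).card : ℝ) + ((NQ v).card : ℝ) + 1 + 2 * ((S (c v)).ncard : ℝ)
            ≤ ((n : ℝ) - 1) + ((S (c v)).ncard : ℝ) := by
          have h1n : (1:ℕ) ≤ n := hn0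
          have hr : (((NS v).card + (NQ v).card + 1 + 2 * (S (c v)).ncard : ℕ) : ℝ)
              ≤ (((n - 1) + (S (c v)).ncard : ℕ) : ℝ) := Nat.cast_le.mpr this
          push_cast [Nat.cast_sub h1n] at hr
          linarith [hr]
        linarith
      · rw [if_neg (hdQ v hQ).1, if_neg (hdQ v hQ).2, if_neg (hdQ v hQ).2,
          if_neg (hdQ v hQ).1, if_neg (hdQ v hQ).2]
        norm_num
      · rw [if_neg (hdI v hI).1, if_pos hI, if_pos hI, if_neg (hdI v hI).1, if_pos hI]
        have hP2 : ((NS v).card : ℝ) ≤ ((S (c v)).ncard : ℝ) := by exact_mod_cast P2 v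
        have hdegsmall : (G.degree v : ℝ) ≤ (k : ℝ) - 1 := by
          have h5 := h4 (c v) v hI
          rw [hdeg v] at h5
          have hlt : G.degree v + 1 ≤ k := by omega
          have h6 : (G.degree v : ℝ) + 1 ≤ (k : ℝ) := by exact_mod_cast hlt
          linarith
        have hd : (G.degree v : ℝ)
            = ((NS v).card : ℝ) + ((NQ v).card : ℝ) + ((NI v).card : ℝ) := by
          exact_mod_cast hsplit v
        have hNI0 : ((NI v).card : ℝ) = 0 := by exact_mod_cast hNIzero v hI
        rw [hnr]
        linarith
    calc ∑ v : V, ((if v ∈ S (c v) then ((NS v).card : ℝ) + ((NQ v).card : ℝ) - ((n : ℝ) - 1) / 2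
            else if v ∈ I (c v) then ((NS v).card : ℝ) + ((NQ v).card : ℝ) - ((n : ℝ) - 1) else 0)
          + (if v ∈ I (c v) then ((NS v).card : ℝ) else 0))
        ≤ ∑ v : V, σf v := Finset.sum_le_sum e3
      _ ≤ 0 := hgroup
  -- finish: handshake + algebra
  have hhand : ∑ v : V, (G.degree v : ℝ) = 2 * (G.edgeSet.ncard : ℝ) := by
    have h := SimpleGraph.sum_degrees_eq_twice_card_edges G
    have hE : G.edgeSet.ncard = G.edgeFinset.card := by
      rw [← Nat.card_coe_set_eq, Nat.card_eq_fintype_card, SimpleGraph.edgeFinset_card]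
    rw [hE]
    exact_mod_cast h
  have hsum1 : ∑ v : V, (2 * (if v ∈ S (c v) then ((n : ℝ) - 1) / 4
      else if v ∈ Q (c v) then ((n : ℝ) - 1) / 2 - ((G.neighborSet v).ncard : ℝ) / 2
      else 0) + (G.degree v : ℝ) - ((n : ℝ) - 1))
      = 2 * ∑ v : V, (if v ∈ S (c v) then ((n : ℝ) - 1) / 4
          else if v ∈ Q (c v) then ((n : ℝ) - 1) / 2 - ((G.neighborSet v).ncard : ℝ) / 2
          else 0) + ∑ v : V, (G.degree v : ℝ) - (Fintype.card V : ℝ) * ((n : ℝ) - 1) := by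
    rw [Finset.sum_sub_distrib, Finset.sum_add_distrib, ← Finset.mul_sum,
      Finset.sum_const, Finset.card_univ, nsmul_eq_mul]
  rw [hsum1] at hT
  linarith
end

section
/- Let n be an even positive integer, k a positive integer, and let G be a k-edge-colored graph with color classes G₁, …, G_k containing no monochromatic connected matching of size n/2. Suppose that for every color i and every connected component C of G_i a partition V(C) = S ∪ Q ∪ I is given satisfying: (1) |Q| + 2|S| = min{v(C), n − 1}; (2) I is an independent set in G_i, and if v(C) ≤ n − 1 then I = ∅; (3) every vertex in Q has at most one neighbor in I within G_i; (4) every vertex in I has degree in G_i less than n/2. Call a vertex v strong if it lies in the S-part for some color, Q-saturated if it lies in the Q-part for every color, and small otherwise (i.e., it lies in the I-part for some color and never in an S-part). Define F(v) = (n−1)/4 if v is strong, F(v) = k·(n−1)/2 − deg_G(v)/2 if v is Q-saturated, and F(v) = 0 if v is small. Then Σ_{v ∈ V(G)} F(v) ≤ k·((n−1)/2)·v(G) − e(G). -/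
/-- The spanning subgraph of `G` consisting of the edges of color `i`. -/
def colorClass {V : Type*} {k : ℕ} (G : SimpleGraph V) (col : Sym2 V → Fin k) (i : Fin k) :
    SimpleGraph V where
  Adj u v := G.Adj u v ∧ col s(u, v) = i
  symm := ⟨fun u v h => ⟨h.1.symm, by rw [Sym2.eq_swap]; exact h.2⟩⟩
  loopless := ⟨fun v h => G.loopless.irrefl v h.1⟩

/-!
Discharging, one color at a time. Color `i` charges a vertex `v` with `ψᵢ(v) + deg_{Gᵢ}(v) / 2`,
where `ψᵢ(v)` is `(n - 1) / 4` if `v` lies in an `S`-part of color `i`,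
`(n - 1) / 2 - deg_{Gᵢ}(v) / 2` if `v` is `Q`-saturated, and `0` otherwise. Summed over the colors
these charges dominate `F(v) + deg_G(v) / 2`, and the degree terms add up to `e(G)`; so it
suffices that every component `C` of every `Gᵢ` carries a total charge of at most
`(n - 1) / 2 · v(C)`.

Write `a = |S|`, `q = |Q|`, `m = |I|` for the partition of `C`. An `S`-vertex has degree below
`v(C)`; a `Q`-vertex has at most one neighbour in `I`, hence degree at most `a + q ≤ n - 1`; and
since `I` is independent and every `Q`-vertex sees at most one `I`-vertex, the degrees in `I` add
up to at most `a m + min(q, q m)`. For `a = 0` this is already the bound. Otherwise `I ≠ ∅`, so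
`v(C) > n - 1`, whence `q + 2a = n - 1` and `m > a`, and the bound reduces to
`q (m - 1 - a / 2) + a ≥ 0`.
-/

open Finset

lemma sqi_charge_count_le {n a q m E : ℕ} (hn : 0 < n) (h1 : q + 2 * a = min (a + q + m) (n - 1))
    (hm : a + q + m ≤ n - 1 → m = 0) (hE : E ≤ q) (hEm : E ≤ q * m) :
    (a : ℝ) * ((n - 1) / 4 + (a + q + m - 1) / 2) + q * ((n - 1) / 2) + (a * m + E) / 2 ≤
      (n - 1) / 2 * (a + q + m) := by
  have hE : (E : ℝ) ≤ q := by exact_mod_cast hE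
  have hEm : (E : ℝ) ≤ q * m := by exact_mod_cast hEm
  rcases Nat.eq_zero_or_pos a with rfl | ha
  · have hq : (q : ℝ) ≤ n - 1 := by
      rw [← Nat.cast_one, ← Nat.cast_sub hn]
      exact_mod_cast (by omega : q ≤ n - 1)
    push_cast
    nlinarith [mul_nonneg (sub_nonneg.2 hq) (Nat.cast_nonneg (α := ℝ) m)]
  · -- `a > 0` rules out `a + q + m ≤ n - 1`, so `q + 2 * a = n - 1 < a + q + m`
    have hbig : ¬ a + q + m ≤ n - 1 := fun h ↦ by have := hm h; omega
    have hn1 : ((q + 2 * a : ℕ) : ℝ) = n - 1 := by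
      rw [← Nat.cast_one, ← Nat.cast_sub hn]
      congr 1
      omega
    have hma : (a : ℝ) + 1 ≤ m := by exact_mod_cast (by omega : a + 1 ≤ m)
    push_cast at hn1
    rw [← hn1]
    nlinarith [mul_nonneg (Nat.cast_nonneg (α := ℝ) a) (Nat.cast_nonneg (α := ℝ) q),
      mul_nonneg (sub_nonneg.2 hma) (Nat.cast_nonneg (α := ℝ) q)]

namespace SimpleGraph

variable {V : Type*}

lemma ncard_neighborSet_eq_degree_s10 {H : SimpleGraph V} (v : V)
    [Fintype (H.neighborSet v)] : (H.neighborSet v).ncard = H.degree v := by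
  rw [Set.ncard_eq_toFinset_card', Set.toFinset_card, card_neighborSet_eq_degree]

structure IsSQIPartition (H : SimpleGraph V) (n : ℕ) (c : H.ConnectedComponent)
    (S Q I : Set V) : Prop where
  union_eq : S ∪ Q ∪ I = c.supp
  disjoint_S_Q : Disjoint S Q
  disjoint_S_I : Disjoint S I
  disjoint_Q_I : Disjoint Q I
  ncard_eq : Q.ncard + 2 * S.ncard = min c.supp.ncard (n - 1)
  independent : ∀ u ∈ I, ∀ v ∈ I, ¬ H.Adj u v
  eq_empty_of_ncard_le : c.supp.ncard ≤ n - 1 → I = ∅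
  unique_neighbor : ∀ q ∈ Q, ∀ v₁ ∈ I, ∀ v₂ ∈ I, H.Adj q v₁ → H.Adj q v₂ → v₁ = v₂

section Finite

variable [Fintype V] [DecidableEq V] {H : SimpleGraph V} [DecidableRel H.Adj]

lemma degree_le_card_add_card_filter {A B : Finset V} {v : V}
    (hN : ∀ w, H.Adj v w → w ∈ A ∪ B) : H.degree v ≤ #A + #{w ∈ B | H.Adj v w} := by
  rw [← card_neighborFinset_eq_degree]
  refine (card_le_card fun w hw ↦ ?_).trans (card_union_le _ _)
  rw [mem_neighborFinset] at hw
  rcases mem_union.1 (hN w hw) with h | h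
  · exact mem_union_left _ h
  · exact mem_union_right _ (mem_filter.2 ⟨h, hw⟩)

lemma degree_lt_card_add_card_filter {A B : Finset V} {v : V} (hv : v ∈ A)
    (hN : ∀ w, H.Adj v w → w ∈ A ∪ B) : H.degree v < #A + #{w ∈ B | H.Adj v w} := by
  have := degree_le_card_add_card_filter (A := A.erase v) (B := B) fun w hw ↦ by
    rcases mem_union.1 (hN w hw) with h | h
    · exact mem_union_left _ (mem_erase.2 ⟨(H.ne_of_adj hw).symm, h⟩)
    · exact mem_union_right _ h
  rw [card_erase_of_mem hv] at this
  have := card_pos.2 ⟨v, hv⟩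
  omega

lemma sum_degree_le_of_independent {S Q I : Finset V}
    (hclosed : ∀ u ∈ I, ∀ w, H.Adj u w → w ∈ S ∪ Q ∪ I) (hI : ∀ u ∈ I, ∀ v ∈ I, ¬ H.Adj u v)
    (hQ : ∀ q ∈ Q, #{w ∈ I | H.Adj q w} ≤ 1) :
    ∑ u ∈ I, H.degree u ≤ #S * #I + min #Q (#Q * #I) := by
  have hdeg : ∑ u ∈ I, H.degree u ≤ #S * #I + ∑ u ∈ I, #{w ∈ Q | H.Adj u w} := by
    rw [mul_comm, ← smul_eq_mul, ← sum_const, ← sum_add_distrib]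
    refine sum_le_sum fun u hu ↦ degree_le_card_add_card_filter fun w hw ↦ ?_
    rcases mem_union.1 (hclosed u hu w hw) with h | h
    · exact h
    · exact absurd hw (hI u hu w h)
  have hE : ∑ u ∈ I, #{w ∈ Q | H.Adj u w} ≤ #Q :=
    calc ∑ u ∈ I, #{w ∈ Q | H.Adj u w} = ∑ q ∈ Q, #{u ∈ I | H.Adj u q} :=
          sum_card_bipartiteAbove_eq_sum_card_bipartiteBelow _
      _ ≤ ∑ q ∈ Q, 1 := sum_le_sum fun q hq ↦ by simpa only [H.adj_comm] using hQ q hq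
      _ = #Q := (card_eq_sum_ones Q).symm
  have hEm : ∑ u ∈ I, #{w ∈ Q | H.Adj u w} ≤ #Q * #I := by
    rw [mul_comm, ← smul_eq_mul, ← sum_const]
    exact sum_le_sum fun _ _ ↦ card_filter_le _ _
  exact hdeg.trans (Nat.add_le_add_left (le_min hE hEm) _)

theorem sum_add_half_degree_le_of_partition {n : ℕ} (hn : 0 < n) {S Q I : Finset V}
    (hSQ : Disjoint S Q) (hSI : Disjoint S I) (hQI : Disjoint Q I)
    (hclosed : ∀ v ∈ S ∪ Q ∪ I, ∀ w, H.Adj v w → w ∈ S ∪ Q ∪ I)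
    (h1 : #Q + 2 * #S = min #(S ∪ Q ∪ I) (n - 1))
    (h2 : ∀ u ∈ I, ∀ v ∈ I, ¬ H.Adj u v)
    (h2' : #(S ∪ Q ∪ I) ≤ n - 1 → I = ∅)
    (h3 : ∀ q ∈ Q, ∀ v₁ ∈ I, ∀ v₂ ∈ I, H.Adj q v₁ → H.Adj q v₂ → v₁ = v₂)
    (φ : V → ℝ) (hφS : ∀ v ∈ S, φ v ≤ (n - 1) / 4)
    (hφQ : ∀ v ∈ Q, φ v = 0 ∨ φ v = (n - 1) / 2 - H.degree v / 2)
    (hφI : ∀ v ∈ I, φ v = 0) :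
    ∑ v ∈ S ∪ Q ∪ I, (φ v + H.degree v / 2) ≤ (n - 1) / 2 * #(S ∪ Q ∪ I) := by
  have hcard : #(S ∪ Q ∪ I) = #S + #Q + #I := by
    rw [card_union_of_disjoint (disjoint_union_left.2 ⟨hSI, hQI⟩), card_union_of_disjoint hSQ]
  have hQ_one : ∀ q ∈ Q, #{w ∈ I | H.Adj q w} ≤ 1 := fun q hq ↦
    card_le_one.2 fun _ h₁ _ h₂ ↦ h3 q hq _ (mem_filter.1 h₁).1 _ (mem_filter.1 h₂).1
      (mem_filter.1 h₁).2 (mem_filter.1 h₂).2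
  have hS : ∀ v ∈ S, φ v + H.degree v / 2 ≤ (n - 1) / 4 + (#S + #Q + #I - 1 : ℝ) / 2 := by
    intro v hv
    have hvU : v ∈ S ∪ Q ∪ I := mem_union_left _ (mem_union_left _ hv)
    have := degree_lt_card_add_card_filter (B := ∅) hvU fun w hw ↦
      mem_union_left _ (hclosed v hvU w hw)
    rw [filter_empty, card_empty, add_zero, hcard] at this
    have : (H.degree v : ℝ) + 1 ≤ #S + #Q + #I := by exact_mod_cast this
    linarith [hφS v hv]
  have hQ : ∀ v ∈ Q, φ v + H.degree v / 2 ≤ (n - 1) / 2 := by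
    intro v hv
    have hvU : v ∈ S ∪ Q ∪ I := mem_union_left _ (mem_union_right _ hv)
    have := degree_lt_card_add_card_filter (mem_union_right S hv) (hclosed v hvU)
    have : H.degree v ≤ n - 1 := by
      have := card_union_le S Q
      have := hQ_one v hv
      have := min_le_right #(S ∪ Q ∪ I) (n - 1)
      omega
    have : (H.degree v : ℝ) ≤ n - 1 := by
      rw [← Nat.cast_one, ← Nat.cast_sub hn]; exact_mod_cast this
    rcases hφQ v hv with h | h <;> rw [h] <;> linarith
  have hI : ∑ v ∈ I, (φ v + H.degree v / 2) = ((∑ v ∈ I, H.degree v : ℕ) : ℝ) / 2 := by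
    rw [Nat.cast_sum, sum_div]
    exact sum_congr rfl fun v hv ↦ by rw [hφI v hv, zero_add]
  have hIdeg : ((∑ v ∈ I, H.degree v : ℕ) : ℝ) ≤ #S * #I + (min #Q (#Q * #I) : ℕ) := by
    exact_mod_cast sum_degree_le_of_independent (fun u hu ↦ hclosed u (mem_union_right _ hu))
      h2 hQ_one
  have hSsum := sum_le_card_nsmul S _ _ hS
  have hQsum := sum_le_card_nsmul Q _ _ hQ
  rw [nsmul_eq_mul] at hSsum hQsum
  have := sqi_charge_count_le hn (hcard ▸ h1) (fun h ↦ by rw [h2' (hcard ▸ h), card_empty])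
    (min_le_left _ _) (min_le_right _ _)
  rw [sum_union (disjoint_union_left.2 ⟨hSI, hQI⟩), sum_union hSQ, hI, hcard,
    Nat.cast_add, Nat.cast_add]
  linarith

theorem IsSQIPartition.sum_add_half_degree_le {n : ℕ} (hn : 0 < n) {c : H.ConnectedComponent}
    {S Q I : Set V} [DecidableEq H.ConnectedComponent] (hP : H.IsSQIPartition n c S Q I)
    (φ : V → ℝ)
    (hφS : ∀ v ∈ S, φ v ≤ (n - 1) / 4)
    (hφQ : ∀ v ∈ Q, φ v = 0 ∨ φ v = (n - 1) / 2 - H.degree v / 2)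
    (hφI : ∀ v ∈ I, φ v = 0) :
    ∑ v with H.connectedComponentMk v = c, (φ v + H.degree v / 2) ≤
      (n - 1) / 2 * #{v | H.connectedComponentMk v = c} := by
  classical
  have hfiber : ({v | H.connectedComponentMk v = c} : Finset V) =
      S.toFinset ∪ Q.toFinset ∪ I.toFinset := by
    ext v
    simp only [mem_filter, mem_univ, true_and, ← Set.toFinset_union, hP.union_eq,
      Set.mem_toFinset, ConnectedComponent.mem_supp_iff]
  have hsupp : c.supp.ncard = #(S.toFinset ∪ Q.toFinset ∪ I.toFinset) := by
    rw [← hfiber, Set.ncard_eq_toFinset_card']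
    congr 1
    ext v
    simp
  have hcard := hP.ncard_eq
  rw [hsupp, Set.ncard_eq_toFinset_card' Q, Set.ncard_eq_toFinset_card' S] at hcard
  rw [hfiber]
  refine sum_add_half_degree_le_of_partition hn (Set.disjoint_toFinset.2 hP.disjoint_S_Q)
    (Set.disjoint_toFinset.2 hP.disjoint_S_I) (Set.disjoint_toFinset.2 hP.disjoint_Q_I) ?_ hcard
    (by simpa using hP.independent)
    (fun h ↦ Set.toFinset_eq_empty.2 (hP.eq_empty_of_ncard_le (hsupp ▸ h)))
    (by simpa using hP.unique_neighbor) φ (by simpa using hφS) (by simpa using hφQ)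
    (by simpa using hφI)
  intro v hv w hw
  rw [← hfiber, mem_filter] at hv ⊢
  exact ⟨mem_univ w, (ConnectedComponent.connectedComponentMk_eq_of_adj hw).symm.trans hv.2⟩

end Finite

theorem sum_add_half_ncard_le_mul_card [Fintype V] {H : SimpleGraph V} {n : ℕ}
    (hn : 0 < n) (S Q I : H.ConnectedComponent → Set V)
    (hP : ∀ c, H.IsSQIPartition n c (S c) (Q c) (I c))
    (φ : V → ℝ) (hφS : ∀ v, v ∈ S (H.connectedComponentMk v) → φ v ≤ (n - 1) / 4)
    (hφQ : ∀ v, v ∈ Q (H.connectedComponentMk v) →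
      φ v = 0 ∨ φ v = (n - 1) / 2 - (H.neighborSet v).ncard / 2)
    (hφI : ∀ v, v ∈ I (H.connectedComponentMk v) → φ v = 0) :
    ∑ v, (φ v + (H.neighborSet v).ncard / 2) ≤ (n - 1) / 2 * Fintype.card V := by
  classical
  simp only [ncard_neighborSet_eq_degree_s10] at hφQ ⊢
  have hmk : ∀ c v, v ∈ S c ∪ Q c ∪ I c → H.connectedComponentMk v = c :=
    fun c v hv ↦ by rwa [(hP c).union_eq] at hv
  rw [← sum_fiberwise univ H.connectedComponentMk, ← card_univ,
    card_eq_sum_card_fiberwise fun v _ ↦ mem_univ (H.connectedComponentMk v), Nat.cast_sum,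
    mul_sum]
  refine sum_le_sum fun c _ ↦ (hP c).sum_add_half_degree_le hn φ (fun v hv ↦ ?_)
    (fun v hv ↦ ?_) (fun v hv ↦ ?_)
  · exact hφS v (by rwa [hmk c v (by simp [hv])])
  · exact hφQ v (by rwa [hmk c v (by simp [hv])])
  · exact hφI v (by rwa [hmk c v (by simp [hv])])

end SimpleGraph

section Coloring

variable {V : Type*} {k : ℕ} (G : SimpleGraph V) (col : Sym2 V → Fin k)

lemma ncard_neighborSet_eq_sum_colorClass [Fintype V] (v : V) :
    (G.neighborSet v).ncard = ∑ i, ((colorClass G col i).neighborSet v).ncard := by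
  classical
  simp only [SimpleGraph.ncard_neighborSet_eq_degree_s10]
  rw [← G.card_neighborFinset_eq_degree,
    card_eq_sum_card_fiberwise fun w _ ↦ mem_univ (col s(v, w))]
  refine sum_congr rfl fun i _ ↦ ?_
  rw [← SimpleGraph.card_neighborFinset_eq_degree]
  congr 1
  ext w
  simp only [mem_filter, SimpleGraph.mem_neighborFinset]
  rfl

lemma sum_sum_ncard_neighborSet_colorClass [Fintype V] :
    ∑ v, ∑ i, ((colorClass G col i).neighborSet v).ncard = 2 * G.edgeSet.ncard := by
  classical
  simp_rw [← ncard_neighborSet_eq_sum_colorClass G col, SimpleGraph.ncard_neighborSet_eq_degree_s10]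
  rw [G.sum_degrees_eq_twice_card_edges, ← G.coe_edgeFinset, Set.ncard_coe_finset]

open scoped Classical in
/-- A strong vertex is charged `(n - 1) / 4` by every color in whose `S`-part it lies, which can
only overestimate its charge `F`. -/
noncomputable def colorCharge (n : ℕ)
    (S Q : (i : Fin k) → (colorClass G col i).ConnectedComponent → Set V) (i : Fin k)
    (v : V) : ℝ :=
  if v ∈ S i ((colorClass G col i).connectedComponentMk v) then ((n : ℝ) - 1) / 4
  else if ∀ j, v ∈ Q j ((colorClass G col j).connectedComponentMk v) then
    ((n : ℝ) - 1) / 2 - ((colorClass G col i).neighborSet v).ncard / 2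
  else 0

theorem sum_colorCharge_add_half_ncard_le [Fintype V] {n : ℕ} (hn : 0 < n)
    {S Q I : (i : Fin k) → (colorClass G col i).ConnectedComponent → Set V}
    (hP : ∀ i c, (colorClass G col i).IsSQIPartition n c (S i c) (Q i c) (I i c)) (i : Fin k) :
    ∑ v, (colorCharge G col n S Q i v + ((colorClass G col i).neighborSet v).ncard / 2) ≤
      (n - 1) / 2 * Fintype.card V := by
  refine SimpleGraph.sum_add_half_ncard_le_mul_card hn (S i) (Q i) (I i) (hP i) _
    (fun v hv ↦ by simp [colorCharge, hv]) (fun v hv ↦ ?_) (fun v hv ↦ ?_)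
  · have hS := Set.disjoint_right.1 (hP i _).disjoint_S_Q hv
    simp only [colorCharge, hS, if_false]
    split_ifs <;> simp
  · have hS := Set.disjoint_right.1 (hP i _).disjoint_S_I hv
    have hQ : ¬ ∀ j, v ∈ Q j ((colorClass G col j).connectedComponentMk v) :=
      fun h ↦ Set.disjoint_right.1 (hP i _).disjoint_Q_I hv (h i)
    simp [colorCharge, hS, hQ]

end Coloring

lemma ite_exists_le_sum_ite {ι M : Type*} [Fintype ι] [AddCommMonoid M] [PartialOrder M]
    [IsOrderedAddMonoid M] {P Q : ι → Prop} [DecidablePred P] [Decidable (∃ i, P i)]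
    [Decidable (∀ i, Q i)] (hPQ : ∀ i, P i → ¬ Q i) {x : M} (hx : 0 ≤ x) (y : ι → M) :
    (if ∃ i, P i then x else if ∀ i, Q i then ∑ i, y i else 0) ≤
      ∑ i, if P i then x else if ∀ j, Q j then y i else 0 := by
  by_cases hP : ∃ i, P i
  · obtain ⟨i, hi⟩ := hP
    have hQ : ¬ ∀ j, Q j := fun h ↦ hPQ i hi (h i)
    simp only [hQ, if_false]
    rw [if_pos ⟨i, hi⟩]
    calc x = if P i then x else 0 := (if_pos hi).symm
      _ ≤ _ := single_le_sum (f := fun j ↦ if P j then x else 0)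
          (fun j _ ↦ by split_ifs <;> simp [hx]) (mem_univ i)
  · simp only [hP, if_false]
    simp only [not_exists] at hP
    split_ifs <;> simp [hP]

open scoped Classical in
theorem stmt10_general (n : ℕ) (hn0 : 0 < n) (k : ℕ)
    (V : Type*) [Fintype V] (G : SimpleGraph V) (col : Sym2 V → Fin k)
    (S Q I : (i : Fin k) → (colorClass G col i).ConnectedComponent → Set V)
    (hpart : ∀ (i : Fin k) (c : (colorClass G col i).ConnectedComponent),
      S i c ∪ Q i c ∪ I i c = c.supp)
    (hdisj : ∀ (i : Fin k) (c : (colorClass G col i).ConnectedComponent),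
      Disjoint (S i c) (Q i c) ∧ Disjoint (S i c) (I i c) ∧ Disjoint (Q i c) (I i c))
    (h1 : ∀ (i : Fin k) (c : (colorClass G col i).ConnectedComponent),
      (Q i c).ncard + 2 * (S i c).ncard = min c.supp.ncard (n - 1))
    (h2 : ∀ (i : Fin k) (c : (colorClass G col i).ConnectedComponent),
      ∀ u ∈ I i c, ∀ v ∈ I i c, ¬ (colorClass G col i).Adj u v)
    (h2' : ∀ (i : Fin k) (c : (colorClass G col i).ConnectedComponent),
      c.supp.ncard ≤ n - 1 → I i c = ∅)
    (h3 : ∀ (i : Fin k) (c : (colorClass G col i).ConnectedComponent),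
      ∀ q ∈ Q i c, ∀ v₁ ∈ I i c, ∀ v₂ ∈ I i c,
        (colorClass G col i).Adj q v₁ → (colorClass G col i).Adj q v₂ → v₁ = v₂) :
    ∑ v : V,
      (if ∃ i : Fin k, v ∈ S i ((colorClass G col i).connectedComponentMk v) then
        ((n : ℝ) - 1) / 4
      else if ∀ i : Fin k, v ∈ Q i ((colorClass G col i).connectedComponentMk v) then
        (k : ℝ) * (((n : ℝ) - 1) / 2) - ((G.neighborSet v).ncard : ℝ) / 2
      else 0)
    ≤ (k : ℝ) * (((n : ℝ) - 1) / 2) * (Fintype.card V : ℝ) - (G.edgeSet.ncard : ℝ) := by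
  have hP (i : Fin k) (c : (colorClass G col i).ConnectedComponent) :
      (colorClass G col i).IsSQIPartition n c (S i c) (Q i c) (I i c) :=
    ⟨hpart i c, (hdisj i c).1, (hdisj i c).2.1, (hdisj i c).2.2, h1 i c, h2 i c, h2' i c, h3 i c⟩
  have hn : (0 : ℝ) ≤ ((n : ℝ) - 1) / 4 :=
    div_nonneg (sub_nonneg.2 (Nat.one_le_cast.2 hn0)) zero_le_four
  set d : Fin k → V → ℝ := fun i v ↦ ((colorClass G col i).neighborSet v).ncard
  calc _ ≤ ∑ v, ∑ i, colorCharge G col n S Q i v := sum_le_sum fun v _ ↦ by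
        have hsat : (k : ℝ) * (((n : ℝ) - 1) / 2) - ((G.neighborSet v).ncard : ℝ) / 2 =
            ∑ i, (((n : ℝ) - 1) / 2 - d i v / 2) := by
          rw [ncard_neighborSet_eq_sum_colorClass G col, Nat.cast_sum, sum_sub_distrib, sum_div]
          simp [d]
        rw [hsat]
        exact ite_exists_le_sum_ite (fun i hS hQ ↦ Set.disjoint_left.1 (hdisj i _).1 hS hQ) hn _
    _ = ∑ i, ∑ v, (colorCharge G col n S Q i v + d i v / 2) - G.edgeSet.ncard := by
        have := congrArg (Nat.cast (R := ℝ)) (sum_sum_ncard_neighborSet_colorClass G col)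
        push_cast at this
        rw [sum_comm]
        simp only [sum_add_distrib, ← sum_div]
        rw [sum_comm (f := fun i v ↦ d i v)]
        linarith
    _ ≤ ∑ _i : Fin k, ((n : ℝ) - 1) / 2 * Fintype.card V - G.edgeSet.ncard := by
        gcongr with i
        exact sum_colorCharge_add_half_ncard_le G col hn0 hP i
    _ = _ := by simp; ring

open scoped Classical in
theorem stmt10 (n : ℕ) (hn : Even n) (hn0 : 0 < n) (k : ℕ) (hk : 0 < k)
    (V : Type*) [Fintype V] (G : SimpleGraph V) (col : Sym2 V → Fin k)
    (hnm : ∀ i : Fin k, ¬ HasConnectedMatching (colorClass G col i) (n / 2))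
    (S Q I : (i : Fin k) → (colorClass G col i).ConnectedComponent → Set V)
    (hpart : ∀ (i : Fin k) (c : (colorClass G col i).ConnectedComponent),
      S i c ∪ Q i c ∪ I i c = c.supp)
    (hdisj : ∀ (i : Fin k) (c : (colorClass G col i).ConnectedComponent),
      Disjoint (S i c) (Q i c) ∧ Disjoint (S i c) (I i c) ∧ Disjoint (Q i c) (I i c))
    (h1 : ∀ (i : Fin k) (c : (colorClass G col i).ConnectedComponent),
      (Q i c).ncard + 2 * (S i c).ncard = min c.supp.ncard (n - 1))
    (h2 : ∀ (i : Fin k) (c : (colorClass G col i).ConnectedComponent),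
      ∀ u ∈ I i c, ∀ v ∈ I i c, ¬ (colorClass G col i).Adj u v)
    (h2' : ∀ (i : Fin k) (c : (colorClass G col i).ConnectedComponent),
      c.supp.ncard ≤ n - 1 → I i c = ∅)
    (h3 : ∀ (i : Fin k) (c : (colorClass G col i).ConnectedComponent),
      ∀ q ∈ Q i c, ∀ v₁ ∈ I i c, ∀ v₂ ∈ I i c,
        (colorClass G col i).Adj q v₁ → (colorClass G col i).Adj q v₂ → v₁ = v₂)
    (h4 : ∀ (i : Fin k) (c : (colorClass G col i).ConnectedComponent),
      ∀ v ∈ I i c, ((colorClass G col i).neighborSet v).ncard < n / 2) :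
    ∑ v : V,
      (if ∃ i : Fin k, v ∈ S i ((colorClass G col i).connectedComponentMk v) then
        ((n : ℝ) - 1) / 4
      else if ∀ i : Fin k, v ∈ Q i ((colorClass G col i).connectedComponentMk v) then
        (k : ℝ) * (((n : ℝ) - 1) / 2) - ((G.neighborSet v).ncard : ℝ) / 2
      else 0)
    ≤ (k : ℝ) * (((n : ℝ) - 1) / 2) * (Fintype.card V : ℝ) - (G.edgeSet.ncard : ℝ) :=
  stmt10_general n hn0 k V G col S Q I hpart hdisj h1 h2 h2' h3
end

section
/- Let k ≥ 4 be an integer, n ≥ 4 an even integer, and let G be a graph on (k − 1/2)·n vertices whose edges are colored with k colors, with color classes G₁, …, G_k, such that no G_i has a connected component with more than n vertices. Then e(G) ≤ C(v(G), 2) − n²/32, where C(m,2) = m(m−1)/2. -/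
/-!
Fix one colour class `H`. Its components have at most `n` vertices, so adding them one at a
time yields a union `A` of components with `|2|A| - v(G)| ≤ n`; then no edge of `H`
joins `A` to its complement `B`, and `4|A||B| ≥ v(G)² - n²`. In any other colour class, the
edges between `A` and `B` inside a component with `m ≤ n` vertices number at most
`m² / 4 ≤ n m / 4`, hence at most `n v(G) / 4` per colour. So at least
`(v(G)² - n² - (k - 1) n v(G)) / 4` pairs between `A` and `B` are non-edges, and for
`v(G) = (k - 1/2) n` this is `((k - 1/2) n² / 2 - n²) / 4 ≥ n² / 32`.
-/

open Finset

theorem Finset.exists_subset_sum_balanced {ι : Type*} [DecidableEq ι] (f : ι → ℕ) {n : ℕ}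
    {s : Finset ι} (hf : ∀ i ∈ s, f i ≤ n) :
    ∃ u ⊆ s,
      2 * ∑ i ∈ u, f i ≤ ∑ i ∈ s, f i + n ∧ ∑ i ∈ s, f i ≤ 2 * ∑ i ∈ u, f i + n := by
  induction s using Finset.induction_on with
  | empty => exact ⟨∅, Subset.refl _, by simp⟩
  | insert a s ha ih =>
    obtain ⟨u, hus, h₁, h₂⟩ := ih fun i hi => hf i (mem_insert_of_mem hi)
    have hfa := hf a (mem_insert_self a s)
    rw [sum_insert ha]
    by_cases hd : ∑ i ∈ s, f i ≤ 2 * ∑ i ∈ u, f i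
    · exact ⟨u, hus.trans (subset_insert a s), by omega, by omega⟩
    · refine ⟨insert a u, insert_subset_insert a hus, ?_⟩
      rw [sum_insert fun h => ha (hus h)]
      omega

theorem Nat.sq_le_four_mul_mul_add_sq {a b n : ℕ} (h₁ : a ≤ b + n) (h₂ : b ≤ a + n) :
    (a + b) ^ 2 ≤ 4 * (a * b) + n ^ 2 := by
  nlinarith [sq_nonneg ((a : ℤ) - b)]

theorem Nat.four_mul_mul_le_of_add_le {x y m n : ℕ} (hxy : x + y ≤ m) (hm : m ≤ n) :
    4 * (x * y) ≤ n * m := by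
  nlinarith [sq_nonneg ((x : ℤ) - y)]

namespace SimpleGraph

variable {V : Type*}

theorem card_edgeFinset_add_card_edgeFinset_compl [Fintype V] [DecidableEq V]
    (G : SimpleGraph V) [DecidableRel G.Adj] :
    #G.edgeFinset + #Gᶜ.edgeFinset = (Fintype.card V).choose 2 := by
  rw [← card_edgeFinset_top_eq_card_choose_two,
    ← card_union_of_disjoint (disjoint_edgeFinset.mpr disjoint_compl_right), ← edgeFinset_sup]
  exact congr_arg card (Set.toFinset_congr (congr_arg edgeSet sup_compl_eq_top))

theorem card_interedges_le_card_edgeFinset (G : SimpleGraph V) [DecidableRel G.Adj]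
    [Fintype G.edgeSet] {s t : Finset V} (hst : Disjoint s t) :
    #(G.interedges s t) ≤ #G.edgeFinset := by
  refine card_le_card_of_injOn (fun p => s(p.1, p.2)) (fun p hp => ?_) (fun p hp q hq hpq => ?_)
  · rw [mem_coe, mem_interedges_iff] at hp
    simpa using hp.2.2
  · rw [mem_coe, mem_interedges_iff] at hp hq
    rcases Sym2.eq_iff.mp hpq with ⟨h₁, h₂⟩ | ⟨h₁, -⟩
    · exact Prod.ext h₁ h₂
    · exact (Finset.disjoint_left.mp hst (h₁ ▸ hp.1) hq.2.1).elim

section Components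

variable [Fintype V] (H : SimpleGraph V) {n : ℕ}

theorem card_filter_connectedComponentMk_le [DecidableEq H.ConnectedComponent]
    (hH : ∀ c : H.ConnectedComponent, c.supp.ncard ≤ n)
    (c : H.ConnectedComponent) : #{v | H.connectedComponentMk v = c} ≤ n := by
  have hK : (({v | H.connectedComponentMk v = c} : Finset V) : Set V) = c.supp := by
    ext v
    simp [ConnectedComponent.mem_supp_iff]
  rw [← Set.ncard_coe_finset, hK]
  exact hH c

theorem four_mul_card_interedges_le [DecidableRel H.Adj]
    (hH : ∀ c : H.ConnectedComponent, c.supp.ncard ≤ n) {s t : Finset V} (hst : Disjoint s t) :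
    4 * #(H.interedges s t) ≤ n * Fintype.card V := by
  classical
  set K : H.ConnectedComponent → Finset V := fun c => {v | H.connectedComponentMk v = c}
  set comps := (univ : Finset V).image H.connectedComponentMk
  have hcover : H.interedges s t ⊆ comps.biUnion fun c => (s ∩ K c) ×ˢ (t ∩ K c) := by
    intro p hp
    rw [mem_interedges_iff] at hp
    have hc : H.connectedComponentMk p.2 = H.connectedComponentMk p.1 :=
      (ConnectedComponent.connectedComponentMk_eq_of_adj hp.2.2).symm
    simp only [mem_biUnion, mem_product, mem_inter, mem_filter, mem_univ, true_and, comps, K]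
    exact ⟨_, mem_image_of_mem _ (mem_univ p.1), ⟨hp.1, rfl⟩, hp.2.1, hc⟩
  have hcomp (c : H.ConnectedComponent) : 4 * (#(s ∩ K c) * #(t ∩ K c)) ≤ n * #(K c) := by
    refine Nat.four_mul_mul_le_of_add_le ?_ (H.card_filter_connectedComponentMk_le hH c)
    rw [← card_union_of_disjoint (disjoint_of_subset_left inter_subset_left
      (disjoint_of_subset_right inter_subset_left hst))]
    exact card_le_card (union_subset inter_subset_right inter_subset_right)
  calc 4 * #(H.interedges s t)
      ≤ 4 * ∑ c ∈ comps, #(s ∩ K c) * #(t ∩ K c) := by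
        gcongr
        refine (card_le_card hcover).trans (card_biUnion_le.trans_eq ?_)
        simp only [card_product]
    _ ≤ ∑ c ∈ comps, n * #(K c) := by rw [mul_sum]; exact sum_le_sum fun c _ => hcomp c
    _ = n * Fintype.card V := by
        rw [← mul_sum, ← card_univ, card_eq_sum_card_image H.connectedComponentMk]

theorem exists_balanced_interedges_compl_eq_empty [DecidableEq V] [DecidableRel H.Adj]
    (hH : ∀ c : H.ConnectedComponent, c.supp.ncard ≤ n) :
    ∃ A : Finset V, H.interedges A Aᶜ = ∅ ∧
      2 * #A ≤ Fintype.card V + n ∧ Fintype.card V ≤ 2 * #A + n := by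
  classical
  set K : H.ConnectedComponent → Finset V := fun c => {v | H.connectedComponentMk v = c}
  set comps := (univ : Finset V).image H.connectedComponentMk
  obtain ⟨u, hu, hbal⟩ := exists_subset_sum_balanced (fun c => #(K c))
    (s := comps) fun c _ => H.card_filter_connectedComponentMk_le hH c
  refine ⟨({v | H.connectedComponentMk v ∈ u} : Finset V), ?_, ?_⟩
  · refine eq_empty_of_forall_notMem fun p hp => ?_
    simp only [mem_interedges_iff, mem_compl, mem_filter, mem_univ, true_and] at hp
    exact hp.2.1 (ConnectedComponent.connectedComponentMk_eq_of_adj hp.2.2 ▸ hp.1)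
  · have hA : #{v | H.connectedComponentMk v ∈ u} = ∑ c ∈ u, #(K c) := by
      rw [card_eq_sum_card_fiberwise (f := H.connectedComponentMk) (t := u)
        fun v hv => by simpa using hv]
      refine sum_congr rfl fun c hc => congr_arg card ?_
      ext v
      simp only [K, mem_filter, mem_univ, true_and, and_iff_right_iff_imp]
      exact fun hv => hv ▸ hc
    have hV : Fintype.card V = ∑ c ∈ comps, #(K c) := by
      rw [← card_univ, card_eq_sum_card_image H.connectedComponentMk]
    rw [hA, hV]
    exact hbal

end Components

variable {k : ℕ} (G : SimpleGraph V) [DecidableRel G.Adj] (col : Sym2 V → Fin k)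

theorem card_interedges_eq_sum_card_interedges_colorClass
    [∀ i, DecidableRel (colorClass G col i).Adj] (s t : Finset V) :
    #(G.interedges s t) = ∑ i, #((colorClass G col i).interedges s t) := by
  rw [card_eq_sum_card_fiberwise (f := fun p => col s(p.1, p.2)) (t := univ)
    fun _ _ => mem_coe.mpr (mem_univ _)]
  refine sum_congr rfl fun i _ => congr_arg card ?_
  ext p
  rw [mem_filter, mem_interedges_iff, mem_interedges_iff, and_assoc, and_assoc]
  rfl

theorem sq_card_le_four_mul_card_edgeFinset_compl_add [Fintype V] [DecidableEq V] {n : ℕ}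
    (hk : 0 < k) (hcomp : ∀ i (c : (colorClass G col i).ConnectedComponent), c.supp.ncard ≤ n) :
    Fintype.card V ^ 2 ≤ 4 * #Gᶜ.edgeFinset + (k - 1) * n * Fintype.card V + n ^ 2 := by
  classical
  set i₀ : Fin k := ⟨0, hk⟩
  obtain ⟨A, hA, h₁, h₂⟩ :=
    (colorClass G col i₀).exists_balanced_interedges_compl_eq_empty (hcomp i₀)
  have hV : #A + #Aᶜ = Fintype.card V := card_add_card_compl A
  have hsplit := G.card_interedges_add_card_interedges_compl (disjoint_compl_right (a := A))
  have hnon := Gᶜ.card_interedges_le_card_edgeFinset (disjoint_compl_right (a := A))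
  have hcross : 4 * #(G.interedges A Aᶜ) ≤ (k - 1) * (n * Fintype.card V) := by
    rw [card_interedges_eq_sum_card_interedges_colorClass, ← add_sum_erase _ _ (mem_univ i₀), hA,
      card_empty, zero_add, mul_sum]
    calc ∑ i ∈ univ.erase i₀, 4 * #((colorClass G col i).interedges A Aᶜ)
        ≤ ∑ i ∈ univ.erase i₀, n * Fintype.card V :=
          sum_le_sum fun i _ => four_mul_card_interedges_le _ (hcomp i) disjoint_compl_right
      _ = (k - 1) * (n * Fintype.card V) := by simp
  have hbal := Nat.sq_le_four_mul_mul_add_sq (a := #A) (b := #Aᶜ) (n := n) (by omega) (by omega)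
  rw [hV] at hbal
  linarith

end SimpleGraph

theorem stmt11_general (k : ℕ) (hk : 4 ≤ k) (n : ℕ)
    (V : Type*) [Fintype V] (G : SimpleGraph V)
    (hv : (Fintype.card V : ℝ) = ((k : ℝ) - 1 / 2) * n)
    (col : Sym2 V → Fin k)
    (hcomp : ∀ (i : Fin k) (c : (colorClass G col i).ConnectedComponent),
      c.supp.ncard ≤ n) :
    (G.edgeSet.ncard : ℝ) ≤
      (Fintype.card V : ℝ) * ((Fintype.card V : ℝ) - 1) / 2 - (n : ℝ) ^ 2 / 32 := by
  classical
  have hnon := G.sq_card_le_four_mul_card_edgeFinset_compl_add col (by omega) hcomp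
  have hedges := G.card_edgeFinset_add_card_edgeFinset_compl
  rw [← G.coe_edgeFinset, Set.ncard_coe_finset]
  have hnonℝ : (Fintype.card V : ℝ) ^ 2 ≤
      4 * #Gᶜ.edgeFinset + ((k : ℝ) - 1) * n * Fintype.card V + (n : ℝ) ^ 2 := by
    rw [← Nat.cast_pred (by omega)]
    exact_mod_cast hnon
  have hedgesℝ : (#G.edgeFinset : ℝ) + #Gᶜ.edgeFinset =
      (Fintype.card V : ℝ) * ((Fintype.card V : ℝ) - 1) / 2 := by
    rw [← Nat.cast_choose_two]
    exact_mod_cast hedges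
  have hkℝ : (4 : ℝ) ≤ k := by exact_mod_cast hk
  rw [hv] at hnonℝ hedgesℝ ⊢
  nlinarith [mul_nonneg (sub_nonneg.mpr hkℝ) (sq_nonneg (n : ℝ))]

theorem stmt11 (k : ℕ) (hk : 4 ≤ k) (n : ℕ) (hn : Even n) (hn4 : 4 ≤ n)
    (V : Type*) [Fintype V] (G : SimpleGraph V)
    (hv : (Fintype.card V : ℝ) = ((k : ℝ) - 1 / 2) * n)
    (col : Sym2 V → Fin k)
    (hcomp : ∀ (i : Fin k) (c : (colorClass G col i).ConnectedComponent),
      c.supp.ncard ≤ n) :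
    (G.edgeSet.ncard : ℝ) ≤
      (Fintype.card V : ℝ) * ((Fintype.card V : ℝ) - 1) / 2 - (n : ℝ) ^ 2 / 32 :=
  stmt11_general k hk n V G hv col hcomp
end
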